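/- arXiv:2203.08391 — 9 statements merged into one kernel-verified Lean document; each statement's English description precedes it below -/
import Mathlib

section
/- Let ρ be a Hermitian complex matrix indexed by (Fin dA × Fin dB) × (Fin dA × Fin dB) and let R be its realignment. For every n ≥ 1, let σ ∈ Perm (Fin (2n)) be the product of transpositions (1 2)(3 4)⋯(2n−1 2n) and let τ ∈ Perm (Fin (2n)) be the product of transpositions (2 3)(4 5)⋯(2n 1) (cyclically shifted pairing). Then trace((R * Rᴴ)^n) = trace((W_σ^A ⊗ W_τ^B) * ρ^{⊗2n}). In particular the 2n-th realignment moment of a bipartite state is the expectation value of a tensor product of SWAP operators acting pairwise on 2n copies of ρ. -/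
/-!
Both sides are sums of products of entries of `ρ`. Expanding `trace ((R Rᴴ)ⁿ)` along closed
walks `g` of length `n` in the `A`-index pairs, and each entry of `R Rᴴ` along a `B`-index pair
`h k`, gives a sum over `(g, h)` whose `k`-th factor is a product of two entries of `ρ`
(Hermiticity turns the conjugated entry of `Rᴴ` into an entry of `ρ`). The right side is a sum
over configurations `y t = (a t, b t)` of the `2n` copies. Since `σ` pairs the position `2k+1`
with `2k` and `τ` pairs it with `2k+2`, such a `y` is the same data as `(g, h)` with
`g k = (a (2k+1), a (2k))` and `h k = (b (2k+1), b (2k+2))`, and under this bijection the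
factors of `y` at `2k+1` and `2k+2` are exactly the two factors of the `k`-th step of the walk.
-/

open Matrix

/-- The `m`-fold tensor power of a square matrix, as a matrix on `Fin m → D`. -/
noncomputable def tensorPow {D : Type*} [Fintype D] (ρ : Matrix D D ℂ) (m : ℕ) :
    Matrix (Fin m → D) (Fin m → D) ℂ :=
  Matrix.of fun x y => ∏ t, ρ (x t) (y t)

/-- The per-party permutation operator `W_σ^A ⊗ W_τ^B` on `m` copies of a bipartite system. -/
noncomputable def permOp2 {dA dB : ℕ} {m : ℕ} (σ τ : Equiv.Perm (Fin m)) :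
    Matrix (Fin m → Fin dA × Fin dB) (Fin m → Fin dA × Fin dB) ℂ :=
  Matrix.of fun x y =>
    if ∀ t, (x t).1 = (y (σ t)).1 ∧ (x t).2 = (y (τ t)).2 then 1 else 0

/-- The realignment of a bipartite matrix. -/
noncomputable def realign {dA dB : ℕ}
    (ρ : Matrix (Fin dA × Fin dB) (Fin dA × Fin dB) ℂ) :
    Matrix (Fin dA × Fin dA) (Fin dB × Fin dB) ℂ :=
  Matrix.of fun p q => ρ (p.1, q.1) (p.2, q.2)

lemma Matrix.pow_succ_apply_eq_sum_prod {I R : Type*} [Fintype I] [DecidableEq I]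
    [CommSemiring R] (M : Matrix I I R) (m : ℕ) (i j : I) :
    (M ^ (m + 1)) i j =
      ∑ f : Fin m → I, ∏ k, M ((Fin.cons i f : Fin (m + 1) → I) k)
        ((Fin.snoc f j : Fin (m + 1) → I) k) := by
  induction m generalizing j with
  | zero => simp [Fin.snoc]
  | succ m ih =>
    rw [pow_succ, mul_apply, ← (Fin.snocEquiv fun _ => I).sum_comp, Fintype.sum_prod_type]
    refine Finset.sum_congr rfl fun x _ => ?_
    rw [ih, Finset.sum_mul]
    refine Finset.sum_congr rfl fun f _ => ?_
    rw [show (Fin.snocEquiv fun _ => I) (x, f) = Fin.snoc f x from rfl]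
    simp only [Fin.prod_univ_castSucc, Fin.cons_snoc_eq_snoc_cons, Fin.snoc_castSucc,
      Fin.snoc_last]

lemma Fin.cons_add_one_eq_snoc {α : Type*} {m : ℕ} (i : α) (f : Fin m → α)
    (k : Fin (m + 1)) :
    (Fin.cons i f : Fin (m + 1) → α) (k + 1) = (Fin.snoc f i : Fin (m + 1) → α) k := by
  induction k using Fin.lastCases with
  | last => simp
  | cast j => simp [Fin.coeSucc_eq_succ]

lemma Matrix.trace_pow_succ_eq_sum_prod {I R : Type*} [Fintype I] [DecidableEq I]
    [CommSemiring R] (M : Matrix I I R) (m : ℕ) :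
    (M ^ (m + 1)).trace = ∑ g : Fin (m + 1) → I, ∏ k, M (g k) (g (k + 1)) := by
  rw [← (Fin.consEquiv fun _ => I).sum_comp, Fintype.sum_prod_type]
  simp [trace, pow_succ_apply_eq_sum_prod, Fin.cons_add_one_eq_snoc]

section Pairing

variable {ι T A B : Type*}

-- `e (.inl k)` stands for the position `2k+1`, `e (.inr k)` for `2k`, and `s` for `k ↦ k + 1`.
def pairingEquiv (e : ι ⊕ ι ≃ T) (s : Equiv.Perm ι) :
    (ι → A × A) × (ι → B × B) ≃ (T → A × B) where
  toFun p t := Sum.elim (fun k => ((p.1 k).1, (p.2 k).1))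
    (fun k => ((p.1 k).2, (p.2 (s.symm k)).2)) (e.symm t)
  invFun y := (fun k => ((y (e (.inl k))).1, (y (e (.inr k))).1),
    fun k => ((y (e (.inl k))).2, (y (e (.inr (s k)))).2))
  left_inv p := by ext <;> simp
  right_inv y := by
    funext t
    obtain ⟨k | k, rfl⟩ := e.surjective t <;> simp

@[simp] lemma pairingEquiv_apply_inl (e : ι ⊕ ι ≃ T) (s : Equiv.Perm ι)
    (p : (ι → A × A) × (ι → B × B)) (k : ι) :
    pairingEquiv e s p (e (.inl k)) = ((p.1 k).1, (p.2 k).1) := by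
  simp [pairingEquiv]

@[simp] lemma pairingEquiv_apply_inr (e : ι ⊕ ι ≃ T) (s : Equiv.Perm ι)
    (p : (ι → A × A) × (ι → B × B)) (k : ι) :
    pairingEquiv e s p (e (.inr k)) = ((p.1 k).2, (p.2 (s.symm k)).2) := by
  simp [pairingEquiv]

lemma Fintype.prod_eq_prod_pairs_of_sumEquiv {M : Type*} [Fintype ι] [Fintype T]
    [CommMonoid M] (e : ι ⊕ ι ≃ T) (s : Equiv.Perm ι) (f : T → M) :
    ∏ t, f t = ∏ k, f (e (.inl k)) * f (e (.inr (s k))) := by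
  rw [← e.prod_comp, Fintype.prod_sum_type, ← Equiv.prod_comp s fun k => f (e (.inr k)),
    Finset.prod_mul_distrib]

theorem sum_prod_pairing_eq [Fintype ι] [DecidableEq ι] [Fintype T] [DecidableEq T]
    [Fintype A] [Fintype B] {R : Type*} [CommSemiring R] (e : ι ⊕ ι ≃ T) (s : Equiv.Perm ι)
    {σ τ : T → T}
    (hσl : ∀ k, σ (e (.inl k)) = e (.inr k)) (hσr : ∀ k, σ (e (.inr k)) = e (.inl k))
    (hτl : ∀ k, τ (e (.inl k)) = e (.inr (s k)))
    (hτr : ∀ k, τ (e (.inr (s k))) = e (.inl k))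
    (F : Matrix (A × B) (A × B) R) :
    ∑ y : T → A × B, ∏ t, F (y t) ((y (σ t)).1, (y (τ t)).2) =
      ∑ g : ι → A × A, ∑ h : ι → B × B, ∏ k,
        F ((g k).1, (h k).1) ((g k).2, (h k).2) *
          F ((g (s k)).2, (h k).2) ((g (s k)).1, (h k).1) := by
  rw [← (pairingEquiv e s).sum_comp, Fintype.sum_prod_type]
  refine Finset.sum_congr rfl fun g _ => Finset.sum_congr rfl fun h _ => ?_
  rw [Fintype.prod_eq_prod_pairs_of_sumEquiv e s]
  simp [hσl, hσr, hτl, hτr]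

end Pairing

def finSumFinEquivOddEven (n : ℕ) : Fin n ⊕ Fin n ≃ Fin (2 * n) where
  toFun := Sum.elim (fun k => ⟨2 * k + 1, by omega⟩) (fun k => ⟨2 * k, by omega⟩)
  invFun t := if t.val % 2 = 1 then .inl ⟨t / 2, by omega⟩ else .inr ⟨t / 2, by omega⟩
  left_inv := by rintro (k | k) <;> simp [Nat.mul_add_div]
  right_inv t := by
    by_cases ht : t.val % 2 = 1 <;> simp [ht, Fin.ext_iff] <;> omega

@[simp] lemma finSumFinEquivOddEven_inl {n : ℕ} (k : Fin n) :
    (finSumFinEquivOddEven n (.inl k) : ℕ) = 2 * k + 1 := rfl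

@[simp] lemma finSumFinEquivOddEven_inr {n : ℕ} (k : Fin n) :
    (finSumFinEquivOddEven n (.inr k) : ℕ) = 2 * k := rfl

lemma apply_finSumFinEquivOddEven_of_adjacent {n : ℕ} {σ : Fin (2 * n) → Fin (2 * n)}
    (hσ : ∀ t : Fin (2 * n),
      ((σ t : Fin (2 * n)) : ℕ) = if (t : ℕ) % 2 = 0 then (t : ℕ) + 1 else (t : ℕ) - 1)
    (k : Fin n) :
    σ (finSumFinEquivOddEven n (.inl k)) = finSumFinEquivOddEven n (.inr k) ∧
      σ (finSumFinEquivOddEven n (.inr k)) = finSumFinEquivOddEven n (.inl k) := by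
  constructor <;> ext <;> simp [hσ]

lemma apply_finSumFinEquivOddEven_of_shifted {m : ℕ}
    {τ : Fin (2 * (m + 1)) → Fin (2 * (m + 1))}
    (hτ : ∀ t : Fin (2 * (m + 1)),
      ((τ t : Fin (2 * (m + 1))) : ℕ) =
        if (t : ℕ) % 2 = 1 then ((t : ℕ) + 1) % (2 * (m + 1))
        else ((t : ℕ) + (2 * (m + 1) - 1)) % (2 * (m + 1)))
    (k : Fin (m + 1)) :
    τ (finSumFinEquivOddEven _ (.inl k)) = finSumFinEquivOddEven _ (.inr (k + 1)) ∧
      τ (finSumFinEquivOddEven _ (.inr (k + 1))) = finSumFinEquivOddEven _ (.inl k) := by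
  have hk := k.isLt
  have hsucc : ((k + 1 : Fin (m + 1)) : ℕ) = (k + 1) % (m + 1) := by simp [Fin.val_add]
  constructor <;> ext <;>
    simp only [hτ, hsucc, finSumFinEquivOddEven_inl, finSumFinEquivOddEven_inr,
      Nat.mul_add_mod_self_left, Nat.mul_mod_right, Nat.mod_succ, zero_ne_one, ↓reduceIte]
  · rw [← Nat.mul_mod_mul_left]
    ring_nf
  · rw [← Nat.mul_mod_mul_left, Nat.mod_add_mod,
      show 2 * (k + 1) + (2 * (m + 1) - 1) = 2 * k + 1 + 2 * (m + 1) by omega,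
      Nat.add_mod_right, Nat.mod_eq_of_lt (by omega)]

lemma permOp2_apply {dA dB m : ℕ} (σ τ : Equiv.Perm (Fin m))
    (x y : Fin m → Fin dA × Fin dB) :
    permOp2 σ τ x y = if x = fun t => ((y (σ t)).1, (y (τ t)).2) then 1 else 0 := by
  simp only [permOp2, of_apply, funext_iff, Prod.ext_iff]

lemma trace_permOp2_mul_tensorPow {dA dB m : ℕ} (σ τ : Equiv.Perm (Fin m))
    (ρ : Matrix (Fin dA × Fin dB) (Fin dA × Fin dB) ℂ) :
    (permOp2 σ τ * tensorPow ρ m).trace =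
      ∑ y : Fin m → Fin dA × Fin dB, ∏ t, ρ (y t) ((y (σ t)).1, (y (τ t)).2) := by
  simp [trace, mul_apply, permOp2_apply, tensorPow,
    Finset.sum_comm (γ := Fin m → Fin dA × Fin dB)]

lemma realign_mul_conjTranspose_apply {dA dB : ℕ}
    {ρ : Matrix (Fin dA × Fin dB) (Fin dA × Fin dB) ℂ} (hρ : ρ.IsHermitian)
    (p p' : Fin dA × Fin dA) :
    (realign ρ * (realign ρ)ᴴ) p p' =
      ∑ q : Fin dB × Fin dB, ρ (p.1, q.1) (p.2, q.2) * ρ (p'.2, q.2) (p'.1, q.1) := by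
  simp [realign, mul_apply, hρ.apply]

/-- The `2n`-th realignment moment of a bipartite state equals the expectation value of a
tensor product of SWAP operators acting pairwise on `2n` copies of `ρ`:
`σ = (1 2)(3 4)⋯(2n−1 2n)` on the `A` factors and the cyclically shifted pairing
`τ = (2 3)(4 5)⋯(2n 1)` on the `B` factors (written here 0-indexed). -/
theorem realignment_moment_as_swap_observable {dA dB n : ℕ} (hn : 1 ≤ n)
    (ρ : Matrix (Fin dA × Fin dB) (Fin dA × Fin dB) ℂ) (hρ : ρ.IsHermitian)
    (σ τ : Equiv.Perm (Fin (2 * n)))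
    (hσ : ∀ t : Fin (2 * n),
      ((σ t : Fin (2 * n)) : ℕ) = if (t : ℕ) % 2 = 0 then (t : ℕ) + 1 else (t : ℕ) - 1)
    (hτ : ∀ t : Fin (2 * n),
      ((τ t : Fin (2 * n)) : ℕ) =
        if (t : ℕ) % 2 = 1 then ((t : ℕ) + 1) % (2 * n)
        else ((t : ℕ) + (2 * n - 1)) % (2 * n)) :
    Matrix.trace ((realign ρ * (realign ρ)ᴴ) ^ n) =
      Matrix.trace (permOp2 σ τ * tensorPow ρ (2 * n)) := by
  obtain ⟨m, rfl⟩ := Nat.exists_eq_add_of_le' hn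
  have hσ' := apply_finSumFinEquivOddEven_of_adjacent hσ
  have hτ' := apply_finSumFinEquivOddEven_of_shifted hτ
  rw [trace_permOp2_mul_tensorPow,
    sum_prod_pairing_eq (finSumFinEquivOddEven _) (Equiv.addRight 1)
      (fun k => (hσ' k).1) (fun k => (hσ' k).2) (fun k => (hτ' k).1) (fun k => (hτ' k).2),
    trace_pow_succ_eq_sum_prod]
  simp only [realign_mul_conjTranspose_apply hρ, Fintype.prod_sum, Equiv.coe_addRight]
end

section
/- Let ρ be a Hermitian complex matrix indexed by (Fin dA × Fin dB) × (Fin dA × Fin dB) and let ρ^{T_A} denote its partial transpose on the first party. For every m ≥ 1, let c ∈ Perm (Fin m) be the cyclic shift t ↦ t+1 (mod m). Then trace((ρ^{T_A})^m) = trace((W_c^A ⊗ W_{c⁻¹}^B) * ρ^{⊗m}), i.e., the m-th partial-transpose moment equals the expectation value, on m copies of ρ, of the tensor product of the forward cyclic permutation operator on the A factors and the backward cyclic permutation operator on the B factors. -/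
open Matrix

/-- The partial transpose on the first party of a bipartite matrix:
`(ρ^{T_A})_{(i,j),(i',j')} = ρ_{(i',j),(i,j')}`. -/
noncomputable def ptransposeA {dA dB : ℕ}
    (ρ : Matrix (Fin dA × Fin dB) (Fin dA × Fin dB) ℂ) :
    Matrix (Fin dA × Fin dB) (Fin dA × Fin dB) ℂ :=
  Matrix.of fun p q => ρ (q.1, p.2) (p.1, q.2)

private lemma pow_apply_path {D : Type*} [Fintype D] [DecidableEq D] (M : Matrix D D ℂ) :
    ∀ (n : ℕ) (i j : D), (M ^ (n+1)) i j =
      ∑ p : Fin n → D, ∏ t : Fin (n+1),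
        M ((Fin.cons i (Fin.snoc p j) : Fin (n+1+1) → D) (Fin.castSucc t))
          ((Fin.cons i (Fin.snoc p j) : Fin (n+1+1) → D) (Fin.succ t)) := by
  intro n
  induction n with
  | zero =>
      intro i j
      simp [Fin.prod_univ_one, Fin.snoc]
  | succ n ih =>
      intro i j
      rw [pow_succ', Matrix.mul_apply]
      simp only [ih]
      rw [← Equiv.sum_comp (Fin.consEquiv (fun _ : Fin (n+1) => D))
        (fun p : Fin (n+1) → D => ∏ t : Fin (n+2),
          M ((Fin.cons i (Fin.snoc p j) : Fin (n+2+1) → D) (Fin.castSucc t))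
            ((Fin.cons i (Fin.snoc p j) : Fin (n+2+1) → D) (Fin.succ t)))]
      rw [Fintype.sum_prod_type]
      refine Finset.sum_congr rfl fun k _ => ?_
      rw [Finset.mul_sum]
      refine Finset.sum_congr rfl fun p _ => ?_
      have hq : Fin.snoc (Fin.cons k p : Fin (n+1) → D) j
          = (Fin.cons k (Fin.snoc p j) : Fin (n+1+1) → D) := (Fin.cons_snoc_eq_snoc_cons k p j).symm
      show M i k * _ = ∏ t : Fin (n+2),
        M ((Fin.cons i (Fin.snoc (Fin.cons k p : Fin (n+1) → D) j) : Fin (n+2+1) → D) (Fin.castSucc t))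
          ((Fin.cons i (Fin.snoc (Fin.cons k p : Fin (n+1) → D) j) : Fin (n+2+1) → D) (Fin.succ t))
      rw [hq]
      conv_rhs => rw [Fin.prod_univ_succ]
      congr 1

private lemma trace_pow_cycle {D : Type*} [Fintype D] [DecidableEq D] (M : Matrix D D ℂ) (n : ℕ)
    (c : Equiv.Perm (Fin (n+1)))
    (hc : ∀ t : Fin (n+1), ((c t : Fin (n+1)) : ℕ) = ((t : ℕ) + 1) % (n+1)) :
    Matrix.trace (M ^ (n+1)) = ∑ r : Fin (n+1) → D, ∏ t, M (r t) (r (c t)) := by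
  have K1 : ∀ (i : D) (p : Fin n → D) (t : Fin (n+1)),
      (Fin.cons i (Fin.snoc p i) : Fin (n+1+1) → D) (Fin.castSucc t) = (Fin.cons i p : Fin (n+1) → D) t := by
    intro i p t
    refine Fin.cases ?_ (fun s => ?_) t
    · simp
    · rw [← Fin.succ_castSucc, Fin.cons_succ, Fin.cons_succ, Fin.snoc_castSucc]
  have K2 : ∀ (i : D) (p : Fin n → D) (t : Fin (n+1)),
      (Fin.cons i p : Fin (n+1) → D) (c t) = (Fin.snoc p i : Fin (n+1) → D) t := by
    intro i p t
    refine Fin.lastCases ?_ (fun s => ?_) t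
    · have h : c (Fin.last n) = 0 := by
        ext
        rw [hc]
        simp
      rw [h]
      simp
    · have h : c (Fin.castSucc s) = Fin.succ s := by
        ext
        rw [hc]
        simp [Nat.mod_eq_of_lt (Nat.succ_lt_succ s.isLt)]
      rw [h]
      simp
  simp only [Matrix.trace, Matrix.diag]
  simp only [pow_apply_path M n]
  rw [← Equiv.sum_comp (Fin.consEquiv (fun _ : Fin (n+1) => D))
    (fun r : Fin (n+1) → D => ∏ t, M (r t) (r (c t))), Fintype.sum_prod_type]
  refine Finset.sum_congr rfl fun i _ => Finset.sum_congr rfl fun p _ =>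
    Finset.prod_congr rfl fun t _ => ?_
  show M _ _ = M ((Fin.cons i p : Fin (n+1) → D) t) ((Fin.cons i p : Fin (n+1) → D) (c t))
  rw [K1, K2, Fin.cons_succ]

/-- The `m`-th partial-transpose moment equals the expectation value, on `m` copies of `ρ`,
of the forward cyclic permutation operator on the `A` factors tensored with the backward
cyclic permutation operator on the `B` factors. -/
theorem ptranspose_moment_as_cyclic_observable {dA dB m : ℕ} (hm : 1 ≤ m)
    (ρ : Matrix (Fin dA × Fin dB) (Fin dA × Fin dB) ℂ) (hρ : ρ.IsHermitian)
    (c : Equiv.Perm (Fin m))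
    (hc : ∀ t : Fin m, ((c t : Fin m) : ℕ) = ((t : ℕ) + 1) % m) :
    Matrix.trace ((ptransposeA ρ) ^ m) =
      Matrix.trace (permOp2 c c⁻¹ * tensorPow ρ m) := by
  obtain ⟨n, rfl⟩ : ∃ n, m = n + 1 := ⟨m - 1, (Nat.succ_pred_eq_of_pos hm).symm⟩
  set S : ℂ := ∑ r : Fin (n+1) → Fin dA × Fin dB,
    ∏ s, ρ ((r s).1, (r (c s)).2) ((r (c s)).1, (r s).2) with hS
  -- Step 1: the right-hand side equals `S`.
  have hR : Matrix.trace (permOp2 c c⁻¹ * tensorPow ρ (n+1)) = S := by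
    have hcond : ∀ x y : Fin (n+1) → Fin dA × Fin dB,
        (∀ t, (x t).1 = (y (c t)).1 ∧ (x t).2 = (y (c⁻¹ t)).2) ↔
          y = fun s => ((x (c⁻¹ s)).1, (x (c s)).2) := by
      intro x y
      constructor
      · intro h
        funext s
        have h1 := (h (c⁻¹ s)).1
        have h2 := (h (c s)).2
        rw [Equiv.Perm.coe_inv, Equiv.apply_symm_apply] at h1
        rw [Equiv.Perm.coe_inv, Equiv.symm_apply_apply] at h2
        exact Prod.ext h1.symm h2.symm
      · rintro rfl t
        simp
    have hR1 : Matrix.trace (permOp2 c c⁻¹ * tensorPow ρ (n+1)) =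
        ∑ x : Fin (n+1) → Fin dA × Fin dB, ∏ t, ρ ((x (c⁻¹ t)).1, (x (c t)).2) (x t) := by
      simp only [Matrix.trace, Matrix.diag, Matrix.mul_apply, permOp2, tensorPow, Matrix.of_apply]
      refine Finset.sum_congr rfl fun x _ => ?_
      simp only [hcond x, ite_mul, one_mul, zero_mul]
      rw [Finset.sum_ite_eq' Finset.univ (fun s => ((x (c⁻¹ s)).1, (x (c s)).2))
        (fun y => ∏ t, ρ (y t) (x t))]
      simp
    rw [hR1, hS]
    let Φ : (Fin (n+1) → Fin dA × Fin dB) ≃ (Fin (n+1) → Fin dA × Fin dB) :=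
      { toFun := fun r u => ((r u).1, (r (c⁻¹ u)).2)
        invFun := fun x u => ((x u).1, (x (c u)).2)
        left_inv := fun r => by funext u; simp
        right_inv := fun x => by funext u; simp }
    refine (Fintype.sum_equiv Φ _ _ fun r => ?_).symm
    show (∏ s, ρ ((r s).1, (r (c s)).2) ((r (c s)).1, (r s).2)) =
      ∏ t, ρ (((Φ r) (c⁻¹ t)).1, ((Φ r) (c t)).2) ((Φ r) t)
    refine (Fintype.prod_equiv c⁻¹ _ _ fun t => ?_).symm
    show ρ (((Φ r) (c⁻¹ t)).1, ((Φ r) (c t)).2) ((Φ r) t) =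
      ρ ((r (c⁻¹ t)).1, (r (c (c⁻¹ t))).2) ((r (c (c⁻¹ t))).1, (r (c⁻¹ t)).2)
    simp [Φ]
  -- Step 2: the left-hand side equals `star S`.
  have hL : Matrix.trace ((ptransposeA ρ) ^ (n+1)) = star S := by
    rw [trace_pow_cycle (ptransposeA ρ) n c hc, hS, star_sum]
    refine Finset.sum_congr rfl fun r _ => ?_
    rw [star_prod]
    refine Finset.prod_congr rfl fun t _ => ?_
    rw [← Matrix.conjTranspose_apply, hρ.eq]
    rfl
  -- Step 3: the trace on the left is real since `ptransposeA ρ` is Hermitian.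
  have hM : (ptransposeA ρ).IsHermitian := by
    refine Matrix.IsHermitian.ext fun p q => ?_
    show star (ρ (p.1, q.2) (q.1, p.2)) = ρ (q.1, p.2) (p.1, q.2)
    rw [← Matrix.conjTranspose_apply, hρ.eq]
  have hreal : star (Matrix.trace ((ptransposeA ρ) ^ (n+1))) =
      Matrix.trace ((ptransposeA ρ) ^ (n+1)) := by
    conv_rhs => rw [← (hM.pow (n+1)).eq]
    rw [Matrix.trace_conjTranspose]
  rw [hR, hL]
  rw [hL] at hreal
  rw [star_star] at hreal
  exact hreal.symm
end

section
/- Let ρ be a Hermitian complex matrix indexed by (Fin dA × Fin dB × Fin dC) × (Fin dA × Fin dB × Fin dC), and let R_π be the tripartite rearrangement that realigns the first two parties and leaves the third untouched, i.e., the matrix with rows indexed by Fin dA × Fin dA × Fin dC, columns indexed by Fin dB × Fin dB × Fin dC, and entries (R_π)_{(i,i',k),(j,j',k')} = ρ_{(i,j,k),(i',j',k')}. Let σ = (1 2)(3 4) and τ = (2 3)(4 1) in Perm (Fin 4) and let c be the 4-cycle t ↦ t+1 (mod 4). Then trace((R_π * R_πᴴ)^2) = trace((W_σ^A ⊗ W_τ^B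 ⊗ W_c^C) * ρ^{⊗4}). -/
open Matrix

/-- The per-party permutation operator `W_σ^A ⊗ W_τ^B ⊗ W_υ^C` on `m` copies of a
tripartite system. -/
noncomputable def permOp3 {dA dB dC : ℕ} {m : ℕ} (σ τ υ : Equiv.Perm (Fin m)) :
    Matrix (Fin m → Fin dA × Fin dB × Fin dC) (Fin m → Fin dA × Fin dB × Fin dC) ℂ :=
  Matrix.of fun x y =>
    if ∀ t, (x t).1 = (y (σ t)).1 ∧ (x t).2.1 = (y (τ t)).2.1 ∧ (x t).2.2 = (y (υ t)).2.2
    then 1 else 0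

/-- The tripartite rearrangement realigning the first two parties and leaving the third
untouched: `(R_π)_{(i,i',k),(j,j',k')} = ρ_{(i,j,k),(i',j',k')}`. -/
noncomputable def realignAB {dA dB dC : ℕ}
    (ρ : Matrix (Fin dA × Fin dB × Fin dC) (Fin dA × Fin dB × Fin dC) ℂ) :
    Matrix (Fin dA × Fin dA × Fin dC) (Fin dB × Fin dB × Fin dC) ℂ :=
  Matrix.of fun p q => ρ (p.1, q.1, p.2.2) (p.2.1, q.2.1, q.2.2)

/-! Both sides are sums of products of four entries of `ρ`. The permutation operator
collapses the trace against `ρ^{⊗4}` to a sum over the four row indices `y 0, …, y 3`,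
and the fourth moment of `R_π` expands (using `ρᴴ = ρ`) into a sum over two row and two
column indices of `R_π`; the two sums match under a bijection between these index sets. -/

theorem trace_permOp3_mul_tensorPow {dA dB dC m : ℕ} (σ τ υ : Equiv.Perm (Fin m))
    (ρ : Matrix (Fin dA × Fin dB × Fin dC) (Fin dA × Fin dB × Fin dC) ℂ) :
    trace (permOp3 σ τ υ * tensorPow ρ m) =
      ∑ y : Fin m → Fin dA × Fin dB × Fin dC,
        ∏ t, ρ (y t) ((y (σ t)).1, (y (τ t)).2.1, (y (υ t)).2.2) := by
  simp only [trace, diag_apply, mul_apply, permOp3, tensorPow, of_apply, ite_mul, one_mul,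
    zero_mul]
  rw [Finset.sum_comm]
  refine Fintype.sum_congr _ _ fun y => ?_
  have hW (x : Fin m → Fin dA × Fin dB × Fin dC) :
      (∀ t, (x t).1 = (y (σ t)).1 ∧ (x t).2.1 = (y (τ t)).2.1 ∧ (x t).2.2 = (y (υ t)).2.2) ↔
        x = fun t => ((y (σ t)).1, (y (τ t)).2.1, (y (υ t)).2.2) := by
    simp only [funext_iff, Prod.ext_iff]
  classical
  simp only [hW, Finset.sum_ite_eq', Finset.mem_univ, if_true]

theorem trace_mul_conjTranspose_sq {ι κ : Type*} [Fintype ι] [Fintype κ] [DecidableEq ι]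
    (M : Matrix ι κ ℂ) :
    trace ((M * Mᴴ) ^ 2) =
      ∑ x : (ι × ι) × (κ × κ),
        M x.1.1 x.2.1 * star (M x.1.2 x.2.1) * (M x.1.2 x.2.2 * star (M x.1.1 x.2.2)) := by
  simp only [sq, trace, diag_apply, mul_apply, conjTranspose_apply, Finset.sum_mul_sum,
    Fintype.sum_prod_type]

/-- The factors `R_π p q`, `star (R_π p' q)`, `R_π p' q'`, `star (R_π p q')` of the expansion of
`trace ((R_π * R_πᴴ) ^ 2)` at `((p, p'), (q, q'))` are entries of `ρ` with row indices
`y 1`, `y 2`, `y 3`, `y 0`. -/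
def fourCopiesEquivRealignIndex (α β γ : Type*) :
    (Fin 4 → α × β × γ) ≃ ((α × α × γ) × (α × α × γ)) × ((β × β × γ) × (β × β × γ)) where
  toFun y :=
    ((((y 1).1, (y 0).1, (y 1).2.2), ((y 3).1, (y 2).1, (y 3).2.2)),
     (((y 1).2.1, (y 2).2.1, (y 2).2.2), ((y 3).2.1, (y 0).2.1, (y 0).2.2)))
  invFun x :=
    ![(x.1.1.2.1, x.2.2.2.1, x.2.2.2.2), (x.1.1.1, x.2.1.1, x.1.1.2.2),
      (x.1.2.2.1, x.2.1.2.1, x.2.1.2.2), (x.1.2.1, x.2.2.1, x.1.2.2.2)]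
  left_inv y := by
    funext t
    fin_cases t <;> rfl
  right_inv _ := rfl

/-- The fourth moment of the tripartite rearrangement `R_π` (realigning parties `A`,`B`
and keeping `C`) equals the expectation value on four copies of `ρ` of
`W_{(1 2)(3 4)}^A ⊗ W_{(2 3)(4 1)}^B ⊗ W_c^C`, with `c` the 4-cycle `t ↦ t+1 (mod 4)`
(written here 0-indexed). -/
theorem tripartite_realign_fourth_moment {dA dB dC : ℕ}
    (ρ : Matrix (Fin dA × Fin dB × Fin dC) (Fin dA × Fin dB × Fin dC) ℂ)
    (hρ : ρ.IsHermitian) :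
    Matrix.trace ((realignAB ρ * (realignAB ρ)ᴴ) ^ 2) =
      Matrix.trace
        (permOp3 (Equiv.swap (0 : Fin 4) 1 * Equiv.swap 2 3)
            (Equiv.swap (1 : Fin 4) 2 * Equiv.swap 3 0)
            (finRotate 4) *
          tensorPow ρ 4) := by
  rw [trace_mul_conjTranspose_sq, trace_permOp3_mul_tensorPow]
  refine (Fintype.sum_equiv (fourCopiesEquivRealignIndex _ _ _) _ _ fun y => ?_).symm
  simp only [Fin.prod_univ_four, Equiv.Perm.coe_mul, Function.comp_apply, finRotate_apply,
    ne_eq, Fin.isValue, Fin.reduceEq, Fin.reduceAdd, zero_add, not_false_eq_true,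
    Equiv.swap_apply_left, Equiv.swap_apply_right, Equiv.swap_apply_of_ne_of_ne, Prod.mk.eta,
    fourCopiesEquivRealignIndex, Equiv.coe_fn_mk, realignAB, of_apply, hρ.apply]
  ring
end

section
/- Fix natural numbers n ≥ 1 and L ≥ 1 and real numbers M₂, M₄, …, M_{2n}. Let C be the set of vectors λ : Fin L → ℝ with λᵢ ≥ 0 for all i and ∑ᵢ λᵢ^{2j} = M_{2j} for each j = 1, …, n, and suppose C is nonempty. Then there exists λ* ∈ C minimizing ∑ᵢ λᵢ over C such that the set of distinct nonzero values {λ*ᵢ : λ*ᵢ > 0} has at most n elements. -/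
open Polynomial Finset Set

noncomputable def posroots (p : ℝ[X]) : Finset ℝ := p.roots.toFinset.filter (fun x => 0 < x)

lemma mem_posroots {p : ℝ[X]} (hp : p ≠ 0) {x : ℝ} :
    x ∈ posroots p ↔ 0 < x ∧ p.eval x = 0 := by
  simp [posroots, Multiset.mem_toFinset, mem_roots hp, IsRoot, and_comm]

lemma posroots_card_lt_support_card : ∀ N : ℕ, ∀ p : ℝ[X], p ≠ 0 → p.natDegree ≤ N →
    (posroots p).card < p.support.card := by
  intro N
  induction N with
  | zero =>
    intro p hp hdeg
    have : p = C (p.coeff 0) := (Polynomial.eq_C_of_natDegree_eq_zero (Nat.le_zero.1 hdeg))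
    have h0 : p.coeff 0 ≠ 0 := by
      intro h; apply hp; rw [this, h, map_zero]
    have : posroots p = ∅ := by
      rw [posroots, this, roots_C]; simp
    rw [this]
    simpa [Finset.card_pos] using Polynomial.nonempty_support_iff.2 hp
  | succ N ih =>
    intro p hp hdeg
    by_cases h0 : p.coeff 0 = 0
    · -- divide by X
      have hpx : p = X * p.divX := by
        conv_lhs => rw [← p.X_mul_divX_add]
        rw [h0, map_zero, add_zero]
      have hd : p.divX ≠ 0 := by
        intro h; apply hp; rw [hpx, h, mul_zero]
      have hdeg1 : 1 ≤ p.natDegree := by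
        by_contra h
        push_neg at h
        exact hp ((Polynomial.eq_C_of_natDegree_eq_zero (Nat.lt_one_iff.1 h)).trans
          (by rw [h0, map_zero]))
      have hsub : posroots p ⊆ posroots p.divX := by
        intro x hx
        rw [mem_posroots hp] at hx
        rw [mem_posroots hd]
        refine ⟨hx.1, ?_⟩
        have := hx.2
        rw [hpx] at this
        simp only [eval_mul, eval_X] at this
        rcases mul_eq_zero.1 this with h | h
        · exact absurd h (ne_of_gt hx.1)
        · exact h
      have hsupp : p.divX.support.card ≤ p.support.card := by
        apply Finset.card_le_card_of_injOn (fun k => k + 1)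
        · intro k hk
          simp only [Finset.mem_coe, Polynomial.mem_support_iff] at hk ⊢
          rwa [← Polynomial.coeff_divX]
        · intro a _ b _ h; simp only [] at h; omega
      calc (posroots p).card ≤ (posroots p.divX).card := Finset.card_le_card hsub
        _ < p.divX.support.card := ih p.divX hd (by
            rw [Polynomial.natDegree_divX_eq_natDegree_tsub_one]; omega)
        _ ≤ p.support.card := hsupp
    · by_cases hder : derivative p = 0
      · have : p = C (p.coeff 0) := Polynomial.eq_C_of_derivative_eq_zero hder
        have : posroots p = ∅ := by
          rw [posroots, this, roots_C]; simp
        rw [this]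
        simpa [Finset.card_pos] using Polynomial.nonempty_support_iff.2 hp
      · -- Rolle step
        have hrolle : (posroots p).card ≤ (posroots (derivative p)).card + 1 := by
          apply Finset.card_le_of_interleaved
          intro x hx y hy hxy _
          rw [mem_posroots hp] at hx hy
          obtain ⟨z, hz1, hz2⟩ := exists_deriv_eq_zero hxy p.continuousOn
            (hx.2.trans hy.2.symm)
          refine ⟨z, ?_, hz1.1, hz1.2⟩
          rw [mem_posroots hder]
          exact ⟨hx.1.trans hz1.1, by rw [← p.deriv]; exact hz2⟩
        have hndp : p.natDegree ≠ 0 := by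
          intro h
          exact hder (by rw [Polynomial.eq_C_of_natDegree_eq_zero h]; simp)
        have hih := ih (derivative p) hder
          (by have := Polynomial.natDegree_derivative_lt hndp; omega)
        have hsupp : (derivative p).support.card + 1 ≤ p.support.card := by
          have h0mem : 0 ∈ p.support := Polynomial.mem_support_iff.2 h0
          have : (derivative p).support.card ≤ (p.support.erase 0).card := by
            apply Finset.card_le_card_of_injOn (fun k => k + 1)
            · intro k hk
              rw [Finset.mem_coe, Polynomial.mem_support_iff] at hk
              rw [Polynomial.coeff_derivative] at hk
              have : p.coeff (k+1) ≠ 0 := by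
                intro h; apply hk; rw [h, zero_mul]
              exact Finset.mem_erase.2 ⟨Nat.succ_ne_zero k, Polynomial.mem_support_iff.2 this⟩
            · intro a _ b _ h; simp only [] at h; omega
          rw [Finset.card_erase_of_mem h0mem] at this
          have hcard : 1 ≤ p.support.card := Finset.card_pos.2 (Polynomial.nonempty_support_iff.2 hp)
          omega
        omega

lemma ext_sum {L : ℕ} (lam : Fin L → ℝ) (y : {i : Fin L // 0 < lam i} → ℝ) (F : ℝ → ℝ)
    (hF : F 0 = 0) :
    ∑ i : Fin L, F (if h : 0 < lam i then y ⟨i, h⟩ else 0)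
      = ∑ i : {i : Fin L // 0 < lam i}, F (y i) := by
  classical
  calc ∑ i : Fin L, F (if h : 0 < lam i then y ⟨i, h⟩ else 0)
      = ∑ i ∈ Finset.univ.filter (fun i => 0 < lam i),
          F (if h : 0 < lam i then y ⟨i, h⟩ else 0) := by
        rw [Finset.sum_filter_of_ne]
        intro i _ hne
        by_contra h
        exact hne (by rw [dif_neg h, hF])
    _ = ∑ i : {i : Fin L // 0 < lam i}, F (if h : 0 < lam i.1 then y ⟨i.1, h⟩ else 0) :=
        Finset.sum_subtype _ (fun i => by simp) _
    _ = ∑ i : {i : Fin L // 0 < lam i}, F (y i) := by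
        apply Finset.sum_congr rfl
        rintro ⟨a, ha⟩ _
        rw [dif_pos ha]

/-- Minimizing `∑ᵢ λᵢ` over nonnegative vectors `λ : Fin L → ℝ` with prescribed power sums
`∑ᵢ λᵢ^{2j} = M_{2j}` for `j = 1, …, n` (assuming the constraint set is nonempty): the
minimum is attained at some `λ*` whose set of distinct nonzero values has at most `n`
elements. -/
theorem exists_minimizer_with_at_most_n_distinct_values
    (n L : ℕ) (hn : 1 ≤ n) (hL : 1 ≤ L) (M : Fin n → ℝ)
    (hne : ∃ lam : Fin L → ℝ, (∀ i, 0 ≤ lam i) ∧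
      ∀ j : Fin n, ∑ i, lam i ^ (2 * ((j : ℕ) + 1)) = M j) :
    ∃ lam : Fin L → ℝ,
      ((∀ i, 0 ≤ lam i) ∧ ∀ j : Fin n, ∑ i, lam i ^ (2 * ((j : ℕ) + 1)) = M j) ∧
      (∀ mu : Fin L → ℝ,
        ((∀ i, 0 ≤ mu i) ∧ ∀ j : Fin n, ∑ i, mu i ^ (2 * ((j : ℕ) + 1)) = M j) →
        ∑ i, lam i ≤ ∑ i, mu i) ∧
      ((Finset.image lam Finset.univ).filter fun v => 0 < v).card ≤ n := by
  classical
  set C : Set (Fin L → ℝ) := {lam | (∀ i, 0 ≤ lam i) ∧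
    ∀ j : Fin n, ∑ i, lam i ^ (2 * ((j : ℕ) + 1)) = M j} with hCdef
  obtain ⟨lam₀, h₀⟩ := hne
  have hCne : C.Nonempty := ⟨lam₀, h₀⟩
  -- C is closed
  have hclosed : IsClosed C := by
    have h1 : IsClosed {lam : Fin L → ℝ | ∀ i, 0 ≤ lam i} := by
      have : {lam : Fin L → ℝ | ∀ i, 0 ≤ lam i} = ⋂ i, {lam | 0 ≤ lam i} := by
        ext; simp
      rw [this]
      exact isClosed_iInter fun i => isClosed_le continuous_const (continuous_apply i)
    have h2 : IsClosed {lam : Fin L → ℝ |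
        ∀ j : Fin n, ∑ i, lam i ^ (2 * ((j : ℕ) + 1)) = M j} := by
      have : {lam : Fin L → ℝ | ∀ j : Fin n, ∑ i, lam i ^ (2 * ((j : ℕ) + 1)) = M j}
          = ⋂ j : Fin n, {lam | ∑ i, lam i ^ (2 * ((j : ℕ) + 1)) = M j} := by
        ext; simp
      rw [this]
      exact isClosed_iInter fun j => isClosed_eq
        (continuous_finset_sum _ fun i _ => (continuous_apply i).pow _) continuous_const
    exact h1.inter h2
  -- C is bounded
  have hbdd : Bornology.IsBounded C := by
    apply Bornology.IsBounded.subset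
      (Metric.isBounded_closedBall (x := (0 : Fin L → ℝ)) (r := Real.sqrt (M ⟨0, hn⟩)))
    intro lam hmem
    rw [Metric.mem_closedBall, dist_pi_le_iff (Real.sqrt_nonneg _)]
    intro i
    simp only [Pi.zero_apply]
    rw [Real.dist_eq, sub_zero, abs_of_nonneg (hmem.1 i)]
    have h1 : lam i ^ (2 * ((0:ℕ) + 1)) ≤ M ⟨0, hn⟩ := by
      rw [← hmem.2 ⟨0, hn⟩]
      exact Finset.single_le_sum (fun i _ => pow_nonneg (hmem.1 i) _) (Finset.mem_univ i)
    exact Real.le_sqrt_of_sq_le (by simpa using h1)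
  have hcomp : IsCompact C := Metric.isCompact_iff_isClosed_bounded.2 ⟨hclosed, hbdd⟩
  obtain ⟨lam, hlamC, hmin⟩ := hcomp.exists_isMinOn hCne
    ((continuous_finset_sum _ fun i _ => continuous_apply i).continuousOn)
  refine ⟨lam, hlamC, fun mu hmu => isMinOn_iff.1 hmin mu hmu, ?_⟩
  by_cases hpos : ∃ i, 0 < lam i
  swap
  · push_neg at hpos
    have hemp : (Finset.image lam Finset.univ).filter (fun v => 0 < v) = ∅ := by
      rw [Finset.filter_eq_empty_iff]
      intro v hv
      rw [Finset.mem_image] at hv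
      obtain ⟨i, _, rfl⟩ := hv
      exact not_lt.2 (hpos i)
    rw [hemp]
    simp
  obtain ⟨i₀, hi₀⟩ := hpos
  haveI hσne : Nonempty {i : Fin L // 0 < lam i} := ⟨⟨i₀, hi₀⟩⟩
  set σ := {i : Fin L // 0 < lam i} with hσdef
  set x₀ : σ → ℝ := fun i => lam i.1 with hx₀def
  set f : Fin n → (σ → ℝ) → ℝ := fun j x => ∑ i, x i ^ (2 * ((j : ℕ) + 1)) with hfdef
  set φ : (σ → ℝ) → ℝ := fun x => ∑ i, x i with hφdef
  set f' : Fin n → (σ → ℝ) →L[ℝ] ℝ := fun j => ∑ i : σ,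
    (((2 * ((j : ℕ) + 1) : ℕ) : ℝ) * (x₀ i) ^ (2 * ((j : ℕ) + 1) - 1)) •
      ContinuousLinearMap.proj i with hf'def
  set φ' : (σ → ℝ) →L[ℝ] ℝ := ∑ i : σ, ContinuousLinearMap.proj i with hφ'def
  have hf' : ∀ j, HasStrictFDerivAt (f j) (f' j) x₀ := by
    intro j
    exact HasStrictFDerivAt.fun_sum fun i _ =>
      ((hasStrictDerivAt_pow (2 * ((j : ℕ) + 1)) (x₀ i)).comp_hasStrictFDerivAt x₀
        (hasStrictFDerivAt_apply (𝕜 := ℝ) (F' := fun _ : σ => ℝ) i x₀) :)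
  have hφ' : HasStrictFDerivAt φ φ' x₀ :=
    HasStrictFDerivAt.fun_sum fun i _ => hasStrictFDerivAt_apply i x₀
  -- local min on constraint set
  have hextr : IsLocalExtrOn φ {x | ∀ j, f j x = f j x₀} x₀ := by
    left
    have hδpos : (0 : ℝ) < Finset.univ.inf' (Finset.univ_nonempty) x₀ := by
      rw [Finset.lt_inf'_iff]
      intro i _
      exact i.2
    set δ := Finset.univ.inf' (Finset.univ_nonempty) x₀ with hδdef
    have hball : Metric.ball x₀ δ ∈ nhdsWithin x₀ {x | ∀ j, f j x = f j x₀} :=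
      nhdsWithin_le_nhds (Metric.ball_mem_nhds x₀ hδpos)
    have hself : {x : σ → ℝ | ∀ j, f j x = f j x₀} ∈
        nhdsWithin x₀ {x | ∀ j, f j x = f j x₀} := self_mem_nhdsWithin
    filter_upwards [hball, hself] with x hx hxS
    -- x has positive coordinates
    have hxpos : ∀ i : σ, 0 < x i := by
      intro i
      have h1 : dist (x i) (x₀ i) ≤ dist x x₀ := dist_le_pi_dist x x₀ i
      have h2 : dist x x₀ < δ := Metric.mem_ball.1 hx
      have h3 : δ ≤ x₀ i := Finset.inf'_le _ (Finset.mem_univ i)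
      rw [Real.dist_eq] at h1
      have := abs_lt.1 (lt_of_le_of_lt h1 h2)
      have hx₀i : x₀ i = lam i.1 := rfl
      nlinarith [this.1, this.2]
    set mu : Fin L → ℝ := fun i => if h : 0 < lam i then x ⟨i, h⟩ else 0 with hmudef
    have hdite_lam : ∀ i : Fin L, (if h : 0 < lam i then x₀ ⟨i, h⟩ else 0) = lam i := by
      intro i
      split
      · rfl
      · next h => exact ((hlamC.1 i).lt_or_eq.elim (fun h' => absurd h' h) (fun h' => h'.symm)).symm ▸ rfl
    have hmuC : mu ∈ C := by
      constructor
      · intro i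
        simp only [hmudef]
        split
        · next h => exact (hxpos ⟨i, h⟩).le
        · exact le_refl 0
      · intro j
        have e1 : ∑ i : Fin L, mu i ^ (2 * ((j : ℕ) + 1))
            = ∑ i : σ, x i ^ (2 * ((j : ℕ) + 1)) := by
          rw [hmudef]
          exact ext_sum lam x (fun t => t ^ (2 * ((j : ℕ) + 1))) (zero_pow (by omega))
        have e2 : ∑ i : Fin L, lam i ^ (2 * ((j : ℕ) + 1))
            = ∑ i : σ, x₀ i ^ (2 * ((j : ℕ) + 1)) := by
          have h5 := ext_sum lam x₀ (fun t => t ^ (2 * ((j : ℕ) + 1))) (zero_pow (by omega))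
          simp only [hdite_lam] at h5
          exact h5
        rw [e1]
        have : f j x = f j x₀ := hxS j
        simp only [hfdef] at this
        rw [this, ← e2, hlamC.2 j]
    -- conclude
    have hsum_mu : ∑ i : Fin L, mu i = φ x := by
      rw [hmudef]
      exact ext_sum lam x (fun t => t) rfl
    have hsum_lam : ∑ i : Fin L, lam i = φ x₀ := by
      have h5 := ext_sum lam x₀ (fun t => t) rfl
      simp only [hdite_lam] at h5
      exact h5
    have := isMinOn_iff.1 hmin mu hmuC
    rw [hsum_mu, hsum_lam] at this
    exact this
  obtain ⟨Λ, Λ₀, hΛne, hsum⟩ := hextr.exists_multipliers_of_hasStrictFDerivAt hf' hφ'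
  -- coordinate equations
  have heq : ∀ i : σ, (∑ j : Fin n, Λ j * (((2 * ((j : ℕ) + 1) : ℕ) : ℝ) *
      (lam i.1) ^ (2 * ((j : ℕ) + 1) - 1))) + Λ₀ = 0 := by
    intro i
    have h1 := congrArg (fun T : (σ → ℝ) →L[ℝ] ℝ => T (Pi.single i 1)) hsum
    simp only [ContinuousLinearMap.add_apply, ContinuousLinearMap.coe_sum',
      Finset.sum_apply, ContinuousLinearMap.smul_apply, ContinuousLinearMap.proj_apply,
      ContinuousLinearMap.zero_apply, smul_eq_mul, hf'def, hφ'def] at h1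
    simp only [Pi.single_apply, mul_ite, mul_one, mul_zero, Finset.sum_ite_eq', Finset.sum_ite_eq,
      Finset.mem_univ, if_true] at h1
    simp +zetaDelta only [Finset.sum_ite_eq', Finset.mem_univ, if_true] at h1
    simpa [hx₀def] using h1
  -- the polynomial
  set P : ℝ[X] := Polynomial.C Λ₀ + ∑ j : Fin n,
    Polynomial.C (Λ j * ((2 * ((j : ℕ) + 1) : ℕ) : ℝ)) * X ^ (2 * (j : ℕ) + 1) with hPdef
  have hc0 : P.coeff 0 = Λ₀ := by
    simp only [hPdef, coeff_add, Polynomial.coeff_C_zero, finset_sum_coeff,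
      Polynomial.coeff_C_mul, coeff_X_pow]
    rw [Finset.sum_eq_zero, add_zero]
    intro j _
    rw [if_neg (by omega), mul_zero]
  have hcj : ∀ j : Fin n, P.coeff (2 * (j : ℕ) + 1)
      = Λ j * ((2 * ((j : ℕ) + 1) : ℕ) : ℝ) := by
    intro j
    simp only [hPdef, coeff_add, Polynomial.coeff_C, finset_sum_coeff,
      Polynomial.coeff_C_mul, coeff_X_pow]
    rw [if_neg (by omega), zero_add]
    rw [Finset.sum_eq_single j]
    · rw [if_pos rfl, mul_one]
    · intro b _ hbj
      rw [if_neg, mul_zero]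
      intro hh
      exact hbj (Fin.ext (by omega))
    · intro h
      exact absurd (Finset.mem_univ j) h
  have hP : P ≠ 0 := by
    intro h
    apply hΛne
    have hΛ0 : Λ₀ = 0 := by
      rw [h] at hc0
      simpa using hc0.symm
    have hΛ : Λ = 0 := by
      funext j
      have h2 := hcj j
      rw [h] at h2
      simp only [Polynomial.coeff_zero] at h2
      rcases mul_eq_zero.1 h2.symm with h3 | h3
      · exact h3
      · exact absurd h3 (by positivity)
    rw [hΛ, hΛ0]
    rfl
  have hsupport : P.support ⊆ insert 0 (Finset.image (fun j : Fin n => 2 * (j : ℕ) + 1)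
      Finset.univ) := by
    intro k hk
    rw [Polynomial.mem_support_iff] at hk
    by_contra hkmem
    apply hk
    simp only [Finset.mem_insert, Finset.mem_image, Finset.mem_univ, true_and] at hkmem
    push_neg at hkmem
    simp only [hPdef, coeff_add, Polynomial.coeff_C, finset_sum_coeff,
      Polynomial.coeff_C_mul, coeff_X_pow]
    rw [if_neg hkmem.1, zero_add]
    apply Finset.sum_eq_zero
    intro j _
    rw [if_neg (fun h => hkmem.2 j h.symm), mul_zero]
  have hroots : ((Finset.image lam Finset.univ).filter fun v => 0 < v) ⊆ posroots P := by
    intro v hv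
    rw [Finset.mem_filter, Finset.mem_image] at hv
    obtain ⟨⟨i, _, rfl⟩, hvpos⟩ := hv
    rw [mem_posroots hP]
    refine ⟨hvpos, ?_⟩
    have h6 := heq ⟨i, hvpos⟩
    have hexp : ∀ j : Fin n, 2 * ((j : ℕ) + 1) - 1 = 2 * (j : ℕ) + 1 := fun j => by omega
    simp only [hexp, ← mul_assoc] at h6
    simp only [hPdef, eval_add, eval_C, eval_finset_sum, eval_mul, eval_pow, eval_X]
    rw [add_comm]
    exact h6
  have hfinal : ((Finset.image lam Finset.univ).filter fun v => 0 < v).card < n + 1 := by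
    calc ((Finset.image lam Finset.univ).filter fun v => 0 < v).card
        ≤ (posroots P).card := Finset.card_le_card hroots
      _ < P.support.card := posroots_card_lt_support_card P.natDegree P hP le_rfl
      _ ≤ n + 1 := by
          refine (Finset.card_le_card hsupport).trans ?_
          refine (Finset.card_insert_le _ _).trans ?_
          have := Finset.card_image_le (s := (Finset.univ : Finset (Fin n)))
            (f := fun j : Fin n => 2 * (j : ℕ) + 1)
          simp only [Finset.card_univ, Fintype.card_fin] at this
          omega
  omega
end

section
/- Let M₂, M₄ be reals with 0 < M₄ ≤ M₂², let q = ⌊M₂²/M₄⌋, U = √(q(q+1)M₄ − q M₂²), and let L ≥ q + 1 be a natural number. Then there exists λ : Fin L → ℝ with λᵢ ≥ 0 for all i, ∑ᵢ λᵢ² = M₂, ∑ᵢ λᵢ⁴ = M₄, and ∑ᵢ λᵢ = √(q(q M₂ + U)/(q+1)) + √((M₂ − U)/(q+1)); namely the configuration consisting of q copies of λ₁ = √((qM₂+U)/(q(q+1))), one copy of λ₂ = √((M₂−U)/(q+1)), and zeros. Hence the lower bound E₄(M₂,M₄) on ∑λᵢ is attained. -/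
lemma sum_ite_aux (L q : ℕ) (h : q + 1 ≤ L) (a b : ℝ) :
    ∑ i : Fin L, (if (i : ℕ) < q then a else if (i : ℕ) = q then b else 0)
      = q * a + b := by
  rw [Fin.sum_univ_eq_sum_range (fun i => if i < q then a else if i = q then b else 0)]
  have h1 : ∀ i ∈ Finset.range L,
      (if i < q then a else if i = q then b else 0)
        = (if i < q then a else 0) + (if i = q then b else 0) := by
    intro i _
    split_ifs with h1 h2 h3
    · exact absurd h2 (by omega)
    · ring
    · ring
    · ring
  rw [Finset.sum_congr rfl h1, Finset.sum_add_distrib]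
  congr 1
  · have h2 : ∑ i ∈ Finset.range L, (if i < q then a else 0)
        = ∑ i ∈ Finset.range q, (if i < q then a else 0) := by
      refine (Finset.sum_subset (Finset.range_subset_range.2 (by omega)) ?_).symm
      intro i _ hi
      simp only [Finset.mem_range] at hi
      simp [hi]
    have h3 : ∑ i ∈ Finset.range q, (if i < q then a else 0) = ∑ i ∈ Finset.range q, a :=
      Finset.sum_congr rfl (fun i hi => if_pos (Finset.mem_range.1 hi))
    rw [h2, h3, Finset.sum_const, Finset.card_range, nsmul_eq_mul]
  · rw [Finset.sum_ite_eq' (Finset.range L) q (fun _ => b)]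
    simp [Finset.mem_range.2 (by omega : q < L)]

/-- The lower bound `E₄(M₂,M₄)` on `∑ λᵢ` given the second and fourth power sums is
attained: with `q = ⌊M₂²/M₄⌋`, `U = √(q(q+1)M₄ − qM₂²)` and `L ≥ q + 1`, the configuration
consisting of `q` copies of `λ₁ = √((qM₂+U)/(q(q+1)))`, one copy of
`λ₂ = √((M₂−U)/(q+1))`, and zeros is nonnegative, has power sums `M₂` and `M₄`, and its
sum equals `E₄(M₂,M₄)`. -/
theorem E4_attained (M₂ M₄ : ℝ) (hM2 : 0 < M₂) (hM4 : 0 < M₄) (hle : M₄ ≤ M₂ ^ 2)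
    (q : ℕ) (hq : q = ⌊M₂ ^ 2 / M₄⌋₊)
    (U : ℝ) (hU : U = Real.sqrt ((q : ℝ) * ((q : ℝ) + 1) * M₄ - (q : ℝ) * M₂ ^ 2))
    (L : ℕ) (hL : q + 1 ≤ L) :
    ∃ lam : Fin L → ℝ,
      lam = (fun i : Fin L =>
        if (i : ℕ) < q then Real.sqrt (((q : ℝ) * M₂ + U) / ((q : ℝ) * ((q : ℝ) + 1)))
        else if (i : ℕ) = q then Real.sqrt ((M₂ - U) / ((q : ℝ) + 1))
        else 0) ∧
      (∀ i, 0 ≤ lam i) ∧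
      (∑ i, lam i ^ 2 = M₂) ∧ (∑ i, lam i ^ 4 = M₄) ∧
      ∑ i, lam i =
        Real.sqrt ((q : ℝ) * ((q : ℝ) * M₂ + U) / ((q : ℝ) + 1)) +
          Real.sqrt ((M₂ - U) / ((q : ℝ) + 1)) := by
  have hq1 : 1 ≤ q := by
    rw [hq]
    exact Nat.le_floor (by rw [le_div_iff₀ hM4]; push_cast; linarith)
  have hq0 : (0 : ℝ) < (q : ℝ) := by exact_mod_cast hq1
  have hqM4 : (q : ℝ) * M₄ ≤ M₂ ^ 2 := by
    have := Nat.floor_le (a := M₂ ^ 2 / M₄) (by positivity)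
    rw [← hq] at this
    calc (q : ℝ) * M₄ ≤ (M₂ ^ 2 / M₄) * M₄ := by nlinarith
    _ = M₂ ^ 2 := by field_simp
  have hM2lt : M₂ ^ 2 < ((q : ℝ) + 1) * M₄ := by
    have := Nat.lt_floor_add_one (M₂ ^ 2 / M₄)
    rw [← hq] at this
    calc M₂ ^ 2 = (M₂ ^ 2 / M₄) * M₄ := by field_simp
    _ < ((q : ℝ) + 1) * M₄ := by nlinarith
  have hnn : 0 ≤ (q : ℝ) * ((q : ℝ) + 1) * M₄ - (q : ℝ) * M₂ ^ 2 := by nlinarith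
  have hU2 : U ^ 2 = (q : ℝ) * ((q : ℝ) + 1) * M₄ - (q : ℝ) * M₂ ^ 2 := by
    rw [hU, Real.sq_sqrt hnn]
  have hU0 : 0 ≤ U := hU ▸ Real.sqrt_nonneg _
  have hUle : U ≤ M₂ := by
    nlinarith [hU2, hU0, sq_nonneg (M₂ - U)]
  set A : ℝ := ((q : ℝ) * M₂ + U) / ((q : ℝ) * ((q : ℝ) + 1)) with hA
  set B : ℝ := (M₂ - U) / ((q : ℝ) + 1) with hB
  have hA0 : 0 ≤ A := by positivity
  have hB0 : 0 ≤ B := by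
    apply div_nonneg (by linarith) (by positivity)
  refine ⟨_, rfl, ?_, ?_, ?_, ?_⟩
  · intro i; split_ifs <;> positivity
  · have := sum_ite_aux L q hL (Real.sqrt A ^ 2) (Real.sqrt B ^ 2)
    simp only [apply_ite (· ^ 2), ne_eq, OfNat.ofNat_ne_zero, not_false_eq_true,
      zero_pow] at this ⊢
    rw [this, Real.sq_sqrt hA0, Real.sq_sqrt hB0, hA, hB]
    field_simp
    ring
  · have := sum_ite_aux L q hL (Real.sqrt A ^ 4) (Real.sqrt B ^ 4)
    simp only [apply_ite (· ^ 4), ne_eq, OfNat.ofNat_ne_zero, not_false_eq_true,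
      zero_pow] at this ⊢
    have h4 : ∀ x : ℝ, 0 ≤ x → Real.sqrt x ^ 4 = x ^ 2 := by
      intro x hx
      rw [show (4:ℕ) = 2*2 by rfl, pow_mul, Real.sq_sqrt hx]
    rw [this, h4 A hA0, h4 B hB0, hA, hB]
    have hq0' : (q : ℝ) ≠ 0 := ne_of_gt hq0
    have hq1' : (q : ℝ) + 1 ≠ 0 := by positivity
    field_simp
    linear_combination ((q:ℝ)+1) * hU2
  · have := sum_ite_aux L q hL (Real.sqrt A) (Real.sqrt B)
    rw [this]
    congr 1
    rw [show (q : ℝ) * ((q : ℝ) * M₂ + U) / ((q : ℝ) + 1) = (q:ℝ)^2 * A by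
      rw [hA]; field_simp]
    rw [Real.sqrt_mul (by positivity), Real.sqrt_sq hq0.le]
end

section
/- Let ρ be a separable bipartite density matrix on (Fin dA × Fin dB), i.e., ρ = ∑_{i ∈ s} p_i (A_i ⊗ B_i) for a finite family where p_i ≥ 0, ∑ p_i = 1, and each A_i, B_i is a density matrix on Fin dA, Fin dB respectively (⊗ the Kronecker product). Let R be the realignment of ρ, M₂ = trace(R Rᴴ) (which is a positive real) and M₄ = trace((R Rᴴ)²). Then with k = ⌊M₂²/M₄⌋ and U = √(k(k+1)M₄ − kM₂²), one has √(k(kM₂+U)/(k+1)) + √((M₂−U)/(k+1)) ≤ 1. That is, the moment-based realignment (CCNR) indicator E₄^{(2,3)}(ρ) does not exceed 1 for separable states. -/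
open Matrix ComplexOrder Kronecker

section AuxE4
open Finset



lemma X1' {p : ℝ} (h1 : 1 < p) (h2 : p ≤ 2) :
    2*Real.sqrt ((2*p^2+1)/3) + Real.sqrt ((4-p^2)/3) < p + 2 := by
  set q := Real.sqrt ((2*p^2+1)/3) with hqdef
  set r := Real.sqrt ((4-p^2)/3) with hrdef
  have hq0 : 0 ≤ q := Real.sqrt_nonneg _
  have hr0 : 0 ≤ r := Real.sqrt_nonneg _
  have hq2 : q^2 = (2*p^2+1)/3 := Real.sq_sqrt (by nlinarith)
  have hr2 : r^2 = (4-p^2)/3 := Real.sq_sqrt (by nlinarith)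
  have hRHSpos : 0 < 2+2*p-p^2 := by nlinarith
  have hA : r*(p+2) < 2+2*p-p^2 := by
    have hsq : (r*(p+2))^2 < (2+2*p-p^2)^2 := by
      have h0 : (r*(p+2))^2 = (4-p^2)/3*(p+2)^2 := by rw [mul_pow, hr2]
      nlinarith [h0, mul_pos (mul_pos (sub_pos.2 h1) (sub_pos.2 h1)) (sub_pos.2 h1)]
    exact lt_of_pow_lt_pow_left₀ 2 (le_of_lt hRHSpos) hsq
  have hBpos : 0 ≤ p + 2 - r := by nlinarith
  have hB : (2*q)^2 < (p+2-r)^2 := by nlinarith [hq2, hr2, hA]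
  have := lt_of_pow_lt_pow_left₀ 2 hBpos hB
  linarith

lemma moveX1 {a b : ℝ} (hb : 0 < b) (hba : b < a) (h4 : a ≤ 4*b) :
    2*Real.sqrt ((2*a+b)/3) + Real.sqrt ((4*b-a)/3) < Real.sqrt a + 2*Real.sqrt b := by
  have hsb : 0 < Real.sqrt b := Real.sqrt_pos.2 hb
  set p := Real.sqrt a / Real.sqrt b with hp
  have hpb : Real.sqrt a = p * Real.sqrt b := by rw [hp, div_mul_cancel₀ _ hsb.ne']
  have hb2 : Real.sqrt b ^ 2 = b := Real.sq_sqrt hb.le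
  have hp2b : p^2 * b = a := by
    rw [hp, div_pow, hb2, Real.sq_sqrt (by linarith : (0:ℝ) ≤ a)]
    field_simp
  have hp1 : 1 < p := by
    have := Real.sqrt_lt_sqrt hb.le hba
    rw [hp, lt_div_iff₀ hsb]; linarith
  have hp2 : p ≤ 2 := by
    by_contra h
    push_neg at h
    nlinarith [hp2b, mul_pos hb (show (0:ℝ) < (p-2)*(p+2) by nlinarith)]
  have key := X1' hp1 hp2
  have e1 : Real.sqrt ((2*a+b)/3) = Real.sqrt b * Real.sqrt ((2*p^2+1)/3) := by
    rw [← Real.sqrt_mul hb.le]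
    congr 1
    rw [← hp2b]; ring
  have e2 : Real.sqrt ((4*b-a)/3) = Real.sqrt b * Real.sqrt ((4-p^2)/3) := by
    rw [← Real.sqrt_mul hb.le]
    congr 1
    rw [← hp2b]; ring
  rw [e1, e2, hpb]
  have h := mul_lt_mul_of_pos_right key hsb
  ring_nf at h ⊢
  linarith

lemma moveX2 {a b : ℝ} (hb : 0 < b) (h4 : 4*b < a) :
    Real.sqrt ((a+2*b+Real.sqrt (2*(a^2+2*b^2) - (a+2*b)^2))/2) +
      Real.sqrt ((a+2*b-Real.sqrt (2*(a^2+2*b^2) - (a+2*b)^2))/2) < Real.sqrt a + 2*Real.sqrt b := by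
  have ha : 0 < a := by linarith
  have hdisc : 0 ≤ 2*(a^2+2*b^2) - (a+2*b)^2 := by nlinarith
  set E := Real.sqrt (2*(a^2+2*b^2) - (a+2*b)^2) with hE
  have hE0 : 0 ≤ E := Real.sqrt_nonneg _
  have hE2 : E^2 = 2*(a^2+2*b^2) - (a+2*b)^2 := Real.sq_sqrt hdisc
  have hES : E ≤ a + 2*b := by nlinarith [hE0]
  have hx0 : 0 ≤ (a+2*b+E)/2 := by nlinarith
  have hy0 : 0 ≤ (a+2*b-E)/2 := by nlinarith
  set x := Real.sqrt ((a+2*b+E)/2) with hx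
  set y := Real.sqrt ((a+2*b-E)/2) with hy
  have hx2 : x^2 = (a+2*b+E)/2 := Real.sq_sqrt hx0
  have hy2 : y^2 = (a+2*b-E)/2 := Real.sq_sqrt hy0
  have hxy : x*y = Real.sqrt (2*a*b+b^2) := by
    rw [hx, hy, ← Real.sqrt_mul hx0]
    congr 1
    nlinarith [hE2]
  have hsa : Real.sqrt a ^2 = a := Real.sq_sqrt ha.le
  have hsb : Real.sqrt b ^2 = b := Real.sq_sqrt hb.le
  have hab : Real.sqrt a * Real.sqrt b = Real.sqrt (a*b) := (Real.sqrt_mul ha.le b).symm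
  have hk : Real.sqrt (2*a*b+b^2) < b + 2*Real.sqrt (a*b) := by
    have h1 : (0:ℝ) ≤ b + 2*Real.sqrt (a*b) := by positivity
    have h2 : Real.sqrt (2*a*b+b^2)^2 < (b + 2*Real.sqrt (a*b))^2 := by
      rw [Real.sq_sqrt (by nlinarith)]
      have h3 : Real.sqrt (a*b)^2 = a*b := Real.sq_sqrt (by positivity)
      nlinarith [Real.sqrt_nonneg (a*b), mul_pos ha hb]
    exact lt_of_pow_lt_pow_left₀ 2 h1 h2
  have hL : (x+y)^2 = (a+2*b) + 2*Real.sqrt (2*a*b+b^2) := by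
    have h0 : (x+y)^2 = x^2 + 2*(x*y) + y^2 := by ring
    rw [h0, hx2, hy2, hxy]; ring
  have hR : (Real.sqrt a + 2*Real.sqrt b)^2 = (a+2*b) + (2*b + 4*Real.sqrt (a*b)) := by
    have h0 : (Real.sqrt a + 2*Real.sqrt b)^2
        = Real.sqrt a^2 + 4*(Real.sqrt a*Real.sqrt b) + 4*Real.sqrt b^2 := by ring
    rw [h0, hsa, hsb, hab]; ring
  have hsum2 : (x+y)^2 < (Real.sqrt a + 2*Real.sqrt b)^2 := by
    rw [hL, hR]; linarith
  have := lt_of_pow_lt_pow_left₀ 2 (by positivity : (0:ℝ) ≤ Real.sqrt a + 2*Real.sqrt b) hsum2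
  linarith

variable {ι : Type*} [Fintype ι] [DecidableEq ι]

def Kset (M₂ M₄ : ℝ) : Set (ι → ℝ) :=
  {lam | (∀ i, 0 ≤ lam i) ∧ ∑ i, lam i = M₂ ∧ ∑ i, (lam i)^2 = M₄}

lemma isCompact_Kset (M₂ M₄ : ℝ) : IsCompact (Kset (ι := ι) M₂ M₄) := by
  have hsub : Kset (ι := ι) M₂ M₄ ⊆ Set.univ.pi (fun _ => Set.Icc (0:ℝ) M₂) := by
    rintro lam ⟨h0, h2, -⟩ i -
    refine ⟨h0 i, ?_⟩
    rw [← h2]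
    exact Finset.single_le_sum (fun j _ => h0 j) (mem_univ i)
  have hclosed : IsClosed (Kset (ι := ι) M₂ M₄) := by
    have h1 : IsClosed {lam : ι → ℝ | ∀ i, 0 ≤ lam i} := by
      have : {lam : ι → ℝ | ∀ i, 0 ≤ lam i} = ⋂ i, {lam | 0 ≤ lam i} := by
        ext lam; simp
      rw [this]
      exact isClosed_iInter fun i => isClosed_le continuous_const (continuous_apply i)
    have h2 : IsClosed {lam : ι → ℝ | ∑ i, lam i = M₂} :=
      isClosed_eq (continuous_finset_sum _ fun i _ => continuous_apply i) continuous_const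
    have h3 : IsClosed {lam : ι → ℝ | ∑ i, (lam i)^2 = M₄} :=
      isClosed_eq (continuous_finset_sum _ fun i _ => (continuous_apply i).pow 2) continuous_const
    exact (h1.inter (h2.inter h3))
  exact (isCompact_univ_pi fun _ => isCompact_Icc).of_isClosed_subset hclosed hsub

noncomputable def sqrtSum : (ι → ℝ) → ℝ := fun lam => ∑ i, Real.sqrt (lam i)

lemma continuous_sqrtSum : Continuous (sqrtSum (ι := ι)) :=
  continuous_finset_sum _ fun i _ => Real.continuous_sqrt.comp (continuous_apply i)

lemma exists_minimizer {M₂ M₄ : ℝ} (h : (Kset (ι := ι) M₂ M₄).Nonempty) :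
    ∃ μ ∈ Kset (ι := ι) M₂ M₄, IsMinOn (sqrtSum (ι := ι)) (Kset M₂ M₄) μ :=
  (isCompact_Kset M₂ M₄).exists_isMinOn h (continuous_sqrtSum).continuousOn

lemma sum_update_F (F : ℝ → ℝ) (g : ι → ℝ) (i : ι) (v : ℝ) :
    ∑ t, F (Function.update g i v t) = ∑ t, F (g t) + F v - F (g i) := by
  have h : (fun t => F (Function.update g i v t)) = Function.update (fun t => F (g t)) i (F v) := by
    ext t
    by_cases ht : t = i
    · subst ht; simp
    · simp [Function.update_of_ne ht]
  rw [h, Finset.sum_update_of_mem (mem_univ i)]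
  have h2 : univ \ {i} = univ.erase i := by
    ext t; simp [Finset.mem_erase, and_comm]
  rw [h2]
  have h3 := Finset.add_sum_erase (univ : Finset ι) (fun t => F (g t)) (mem_univ i)
  linarith [h3]

lemma sum_three_update (F : ℝ → ℝ) (μ : ι → ℝ) {i j l : ι}
    (hij : i ≠ j) (hil : i ≠ l) (hjl : j ≠ l) (v₁ v₂ v₃ : ℝ) :
    ∑ t, F (Function.update (Function.update (Function.update μ i v₁) j v₂) l v₃ t)
      = ∑ t, F (μ t) + F v₁ - F (μ i) + F v₂ - F (μ j) + F v₃ - F (μ l) := by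
  have e1 : Function.update (Function.update μ i v₁) j v₂ l = μ l := by
    rw [Function.update_of_ne hjl.symm, Function.update_of_ne hil.symm]
  have e2 : Function.update μ i v₁ j = μ j := by rw [Function.update_of_ne hij.symm]
  rw [sum_update_F, sum_update_F, sum_update_F, e1, e2]
  all_goals ring

lemma no_smallpair {M₂ M₄ : ℝ} {μ : ι → ℝ} (hμK : μ ∈ Kset M₂ M₄)
    (hmin : IsMinOn sqrtSum (Kset M₂ M₄) μ) {i j l : ι}
    (hij : i ≠ j) (hil : i ≠ l) (hjl : j ≠ l)
    (hb : 0 < μ j) (heq : μ j = μ l) (hba : μ j < μ i) : False := by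
  obtain ⟨h0, h2, h4⟩ := hμK
  set a := μ i with hadef
  set b := μ j with hbdef
  have ha : 0 < a := lt_trans hb hba
  rcases le_or_gt a (4*b) with h4b | h4b
  · -- X1 move
    set A' := (2*a+b)/3 with hA'
    set B' := (4*b-a)/3 with hB'
    have hA'pos : 0 ≤ A' := by rw [hA']; positivity
    have hB'pos : 0 ≤ B' := by rw [hB']; linarith
    set ν := Function.update (Function.update (Function.update μ i B') j A') l A' with hν
    have hνK : ν ∈ Kset M₂ M₄ := by
      refine ⟨?_, ?_, ?_⟩
      · intro t
        rw [hν]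
        by_cases htl : t = l
        · subst htl; rw [Function.update_self]; exact hA'pos
        rw [Function.update_of_ne htl]
        by_cases htj : t = j
        · subst htj; rw [Function.update_self]; exact hA'pos
        rw [Function.update_of_ne htj]
        by_cases hti : t = i
        · subst hti; rw [Function.update_self]; exact hB'pos
        rw [Function.update_of_ne hti]; exact h0 t
      · rw [hν, sum_three_update (fun x => x) μ hij hil hjl]
        rw [h2, ← heq, ← hbdef, ← hadef, hA', hB']; ring
      · rw [hν, sum_three_update (fun x => x^2) μ hij hil hjl]
        rw [h4, ← heq, ← hbdef, ← hadef, hA', hB']; ring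
    have hlt := moveX1 hb hba h4b
    have hf : sqrtSum ν < sqrtSum μ := by
      rw [hν]
      show (∑ t, Real.sqrt (Function.update (Function.update (Function.update μ i B') j A') l A' t)) < _
      rw [sum_three_update Real.sqrt μ hij hil hjl]
      rw [← heq, ← hbdef, ← hadef, hA', hB']
      have : sqrtSum μ = ∑ t, Real.sqrt (μ t) := rfl
      rw [this] at *
      linarith [hlt]
    exact absurd (hmin hνK) (not_le.2 hf)
  · -- X2 move
    have hdisc : 0 ≤ 2*(a^2+2*b^2) - (a+2*b)^2 := by nlinarith
    set E := Real.sqrt (2*(a^2+2*b^2) - (a+2*b)^2) with hE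
    have hE0 : 0 ≤ E := Real.sqrt_nonneg _
    have hE2 : E^2 = 2*(a^2+2*b^2) - (a+2*b)^2 := Real.sq_sqrt hdisc
    have hES : E ≤ a + 2*b := by nlinarith
    set x := (a+2*b+E)/2 with hx
    set y := (a+2*b-E)/2 with hy
    have hx0 : 0 ≤ x := by rw [hx]; linarith
    have hy0 : 0 ≤ y := by rw [hy]; linarith
    set ν := Function.update (Function.update (Function.update μ i x) j y) l 0 with hν
    have hνK : ν ∈ Kset M₂ M₄ := by
      refine ⟨?_, ?_, ?_⟩
      · intro t
        rw [hν]
        by_cases htl : t = l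
        · subst htl; rw [Function.update_self]
        rw [Function.update_of_ne htl]
        by_cases htj : t = j
        · subst htj; rw [Function.update_self]; exact hy0
        rw [Function.update_of_ne htj]
        by_cases hti : t = i
        · subst hti; rw [Function.update_self]; exact hx0
        rw [Function.update_of_ne hti]; exact h0 t
      · rw [hν, sum_three_update (fun x => x) μ hij hil hjl]
        rw [h2, ← heq, ← hbdef, ← hadef, hx, hy]; ring
      · rw [hν, sum_three_update (fun x => x^2) μ hij hil hjl]
        rw [h4, ← heq, ← hbdef, ← hadef, hx, hy]
        nlinarith [hE2]
    have hlt := moveX2 hb h4b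
    have hf : sqrtSum ν < sqrtSum μ := by
      rw [hν]
      show (∑ t, Real.sqrt (Function.update (Function.update (Function.update μ i x) j y) l 0 t)) < _
      rw [sum_three_update Real.sqrt μ hij hil hjl]
      rw [← heq, ← hbdef, ← hadef, hx, hy]
      have : sqrtSum μ = ∑ t, Real.sqrt (μ t) := rfl
      rw [this] at *
      rw [Real.sqrt_zero]
      rw [hE] at *
      linarith [hlt]
    exact absurd (hmin hνK) (not_le.2 hf)

lemma no_three_distinct {M₂ M₄ : ℝ} {μ : ι → ℝ} (hμK : μ ∈ Kset M₂ M₄)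
    (hmin : IsMinOn sqrtSum (Kset M₂ M₄) μ) {i j l : ι}
    (ha : 0 < μ i) (hb : 0 < μ j) (hc : 0 < μ l)
    (hab : μ i ≠ μ j) (hac : μ i ≠ μ l) (hbc : μ j ≠ μ l) : False := by
  have hij : i ≠ j := fun h => hab (by rw [h])
  have hil : i ≠ l := fun h => hac (by rw [h])
  have hjl : j ≠ l := fun h => hbc (by rw [h])
  obtain ⟨h0, h2, h4⟩ := hμK
  set a := μ i with hadef
  set b := μ j with hbdef
  set c := μ l with hcdef
  set m : ℝ := (a+b+c)/3 with hm
  have h3pos : (0:ℝ) < Real.sqrt 3 := Real.sqrt_pos.2 (by norm_num)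
  set k3 : ℝ := (Real.sqrt 3)⁻¹ with hk3def
  have hk3ne : k3 ≠ 0 := by rw [hk3def]; exact inv_ne_zero (ne_of_gt h3pos)
  have hk3 : k3^2*3 = 1 := by
    rw [hk3def, inv_pow, Real.sq_sqrt (by norm_num : (0:ℝ) ≤ 3)]
    norm_num
  set c₁ : ℝ → ℝ := fun t => m + Real.cos t * (a - m) + Real.sin t * (k3*(c - b)) with hc1def
  set c₂ : ℝ → ℝ := fun t => m + Real.cos t * (b - m) + Real.sin t * (k3*(a - c)) with hc2def
  set c₃ : ℝ → ℝ := fun t => m + Real.cos t * (c - m) + Real.sin t * (k3*(b - a)) with hc3def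
  have hc10 : c₁ 0 = a := by rw [hc1def]; simp
  have hc20 : c₂ 0 = b := by rw [hc2def]; simp
  have hc30 : c₃ 0 = c := by rw [hc3def]; simp
  have hsum : ∀ t, c₁ t + c₂ t + c₃ t = a + b + c := by
    intro t; rw [hc1def, hc2def, hc3def]; simp only; ring
  have hsq : ∀ t, c₁ t^2 + c₂ t^2 + c₃ t^2 = a^2+b^2+c^2 := by
    intro t
    have hcs := Real.sin_sq_add_cos_sq t
    rw [hc1def, hc2def, hc3def]
    simp only
    linear_combination (((a-(a+b+c)/3)^2 + (b-(a+b+c)/3)^2 + (c-(a+b+c)/3)^2)) * hcs +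
      (Real.sin t^2 * ((a-(a+b+c)/3)^2 + (b-(a+b+c)/3)^2 + (c-(a+b+c)/3)^2)) * hk3
  -- continuity and eventual positivity
  have hcont1 : Continuous c₁ := by
    rw [hc1def]
    exact (continuous_const.add (Real.continuous_cos.mul continuous_const)).add
      (Real.continuous_sin.mul continuous_const)
  have hcont2 : Continuous c₂ := by
    rw [hc2def]
    exact (continuous_const.add (Real.continuous_cos.mul continuous_const)).add
      (Real.continuous_sin.mul continuous_const)
  have hcont3 : Continuous c₃ := by
    rw [hc3def]
    exact (continuous_const.add (Real.continuous_cos.mul continuous_const)).add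
      (Real.continuous_sin.mul continuous_const)
  have hev1 : ∀ᶠ t in nhds (0:ℝ), 0 < c₁ t := by
    have hop : IsOpen {t : ℝ | 0 < c₁ t} := isOpen_lt continuous_const hcont1
    have hmem : {t : ℝ | 0 < c₁ t} ∈ nhds (0:ℝ) :=
      hop.mem_nhds (by simp only [Set.mem_setOf_eq, hc10]; exact ha)
    exact Filter.eventually_iff.2 hmem
  have hev2 : ∀ᶠ t in nhds (0:ℝ), 0 < c₂ t := by
    have hop : IsOpen {t : ℝ | 0 < c₂ t} := isOpen_lt continuous_const hcont2
    have hmem : {t : ℝ | 0 < c₂ t} ∈ nhds (0:ℝ) :=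
      hop.mem_nhds (by simp only [Set.mem_setOf_eq, hc20]; exact hb)
    exact Filter.eventually_iff.2 hmem
  have hev3 : ∀ᶠ t in nhds (0:ℝ), 0 < c₃ t := by
    have hop : IsOpen {t : ℝ | 0 < c₃ t} := isOpen_lt continuous_const hcont3
    have hmem : {t : ℝ | 0 < c₃ t} ∈ nhds (0:ℝ) :=
      hop.mem_nhds (by simp only [Set.mem_setOf_eq, hc30]; exact hc)
    exact Filter.eventually_iff.2 hmem
  -- local min of g
  set g : ℝ → ℝ := fun t => Real.sqrt (c₁ t) + Real.sqrt (c₂ t) + Real.sqrt (c₃ t) with hgdef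
  have hg0 : g 0 = Real.sqrt a + Real.sqrt b + Real.sqrt c := by
    rw [hgdef]; simp only; rw [hc10, hc20, hc30]
  have hlocmin : IsLocalMin g 0 := by
    refine ((hev1.and (hev2.and hev3)).mono ?_)
    rintro t ⟨ht1, ht2, ht3⟩
    set ν := Function.update (Function.update (Function.update μ i (c₁ t)) j (c₂ t)) l (c₃ t) with hν
    have hνK : ν ∈ Kset M₂ M₄ := by
      refine ⟨?_, ?_, ?_⟩
      · intro t'
        rw [hν]
        by_cases htl : t' = l
        · subst htl; rw [Function.update_self]; exact ht3.le
        rw [Function.update_of_ne htl]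
        by_cases htj : t' = j
        · subst htj; rw [Function.update_self]; exact ht2.le
        rw [Function.update_of_ne htj]
        by_cases hti : t' = i
        · subst hti; rw [Function.update_self]; exact ht1.le
        rw [Function.update_of_ne hti]; exact h0 t'
      · rw [hν, sum_three_update (fun x => x) μ hij hil hjl, h2]
        have := hsum t
        linarith [this]
      · rw [hν, sum_three_update (fun x => x^2) μ hij hil hjl, h4]
        have := hsq t
        linarith [this]
    have hge := hmin hνK
    have hval : sqrtSum ν = sqrtSum μ + g t - g 0 := by
      rw [hν]
      show (∑ t', Real.sqrt (Function.update (Function.update (Function.update μ i (c₁ t)) j (c₂ t)) l (c₃ t) t')) = _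
      have hgt : g t = Real.sqrt (c₁ t) + Real.sqrt (c₂ t) + Real.sqrt (c₃ t) := rfl
      have hsm : sqrtSum μ = ∑ t', Real.sqrt (μ t') := rfl
      rw [sum_three_update Real.sqrt μ hij hil hjl, hgt, hg0, hsm, ← hadef, ← hbdef, ← hcdef]
      ring
    have : sqrtSum μ ≤ sqrtSum μ + g t - g 0 := le_of_le_of_eq hge hval
    linarith [this]
  -- derivative
  have hd1 : HasDerivAt c₁ (k3*(c-b)) 0 := by
    have h := (((Real.hasDerivAt_cos 0).mul_const (a-m)).const_add m).add
      ((Real.hasDerivAt_sin 0).mul_const (k3*(c-b)))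
    rw [hc1def]
    simp at h
    exact h
  have hd2 : HasDerivAt c₂ (k3*(a-c)) 0 := by
    have h := (((Real.hasDerivAt_cos 0).mul_const (b-m)).const_add m).add
      ((Real.hasDerivAt_sin 0).mul_const (k3*(a-c)))
    rw [hc2def]
    simp at h
    exact h
  have hd3 : HasDerivAt c₃ (k3*(b-a)) 0 := by
    have h := (((Real.hasDerivAt_cos 0).mul_const (c-m)).const_add m).add
      ((Real.hasDerivAt_sin 0).mul_const (k3*(b-a)))
    rw [hc3def]
    simp at h
    exact h
  have hs1 : HasDerivAt (fun t => Real.sqrt (c₁ t)) (1/(2*Real.sqrt a) * (k3*(c-b))) 0 := by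
    have hx := Real.hasDerivAt_sqrt (show c₁ 0 ≠ 0 by rw [hc10]; exact ne_of_gt ha)
    have := hx.comp 0 hd1
    rwa [hc10] at this
  have hs2 : HasDerivAt (fun t => Real.sqrt (c₂ t)) (1/(2*Real.sqrt b) * (k3*(a-c))) 0 := by
    have hx := Real.hasDerivAt_sqrt (show c₂ 0 ≠ 0 by rw [hc20]; exact ne_of_gt hb)
    have := hx.comp 0 hd2
    rwa [hc20] at this
  have hs3 : HasDerivAt (fun t => Real.sqrt (c₃ t)) (1/(2*Real.sqrt c) * (k3*(b-a))) 0 := by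
    have hx := Real.hasDerivAt_sqrt (show c₃ 0 ≠ 0 by rw [hc30]; exact ne_of_gt hc)
    have := hx.comp 0 hd3
    rwa [hc30] at this
  have hgD : HasDerivAt g (1/(2*Real.sqrt a) * (k3*(c-b)) + 1/(2*Real.sqrt b) * (k3*(a-c))
      + 1/(2*Real.sqrt c) * (k3*(b-a))) 0 := by
    rw [hgdef]
    exact (hs1.add hs2).add hs3
  have hD0 : 1/(2*Real.sqrt a) * (k3*(c-b)) + 1/(2*Real.sqrt b) * (k3*(a-c))
      + 1/(2*Real.sqrt c) * (k3*(b-a)) = 0 := by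
    rw [← hgD.deriv]
    exact hlocmin.deriv_eq_zero
  -- contradiction via the algebraic identity
  set p := Real.sqrt a with hp
  set q := Real.sqrt b with hq
  set r := Real.sqrt c with hr
  have hppos : 0 < p := Real.sqrt_pos.2 ha
  have hqpos : 0 < q := Real.sqrt_pos.2 hb
  have hrpos : 0 < r := Real.sqrt_pos.2 hc
  have hp2 : p^2 = a := Real.sq_sqrt ha.le
  have hq2 : q^2 = b := Real.sq_sqrt hb.le
  have hr2 : r^2 = c := Real.sq_sqrt hc.le
  have hpq : p ≠ q := fun h => hab (by rw [← hp2, ← hq2, h])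
  have hpr : p ≠ r := fun h => hac (by rw [← hp2, ← hr2, h])
  have hqr : q ≠ r := fun h => hbc (by rw [← hq2, ← hr2, h])
  have hprod : (p-q)*(p-r)*(q-r)*(p+q+r) ≠ 0 :=
    mul_ne_zero (mul_ne_zero (mul_ne_zero (sub_ne_zero.2 hpq) (sub_ne_zero.2 hpr))
      (sub_ne_zero.2 hqr)) (by positivity)
  have hkey : q*r*(r^2-q^2) + p*r*(p^2-r^2) + p*q*(q^2-p^2)
      = -((p-q)*(p-r)*(q-r)*(p+q+r)) := by ring
  have hzero : k3 * (q*r*(r^2-q^2) + p*r*(p^2-r^2) + p*q*(q^2-p^2)) = 0 := by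
    have hmul : k3 * (q*r*(r^2-q^2) + p*r*(p^2-r^2) + p*q*(q^2-p^2))
        = (2*p*q*r) * (1/(2*p) * (k3*(r^2-q^2)) + 1/(2*q) * (k3*(p^2-r^2))
          + 1/(2*r) * (k3*(q^2-p^2))) := by
      field_simp
    rw [hmul]
    rw [hp2, hq2, hr2]
    rw [hD0]
    ring
  have : q*r*(r^2-q^2) + p*r*(p^2-r^2) + p*q*(q^2-p^2) = 0 := by
    rcases mul_eq_zero.1 hzero with h | h
    · exact absurd h hk3ne
    · exact h
  rw [hkey] at this
  exact hprod (by linarith [this])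

lemma sum_of_one_val (F : ℝ → ℝ) (hF0 : F 0 = 0) (μ : ι → ℝ) (a : ℝ) (ha0 : a ≠ 0)
    (hall : ∀ t, μ t = a ∨ μ t = 0) :
    ∑ t, F (μ t) = ((univ.filter (fun t => μ t = a)).card : ℝ) * F a := by
  have h1 : ∑ t, F (μ t) = ∑ t, (if μ t = a then F a else 0) := by
    apply Finset.sum_congr rfl
    intro t _
    rcases hall t with h | h
    · rw [h, if_pos rfl]
    · rw [h, if_neg (fun hh => ha0 hh.symm), hF0]
  rw [h1, ← Finset.sum_filter, Finset.sum_const, nsmul_eq_mul]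

lemma sum_of_two_vals (F : ℝ → ℝ) (hF0 : F 0 = 0) (μ : ι → ℝ) (a b : ℝ) (ha0 : a ≠ 0)
    (hba : b ≠ a) (j₀ : ι) (hj : μ j₀ = b)
    (hother : ∀ t, t ≠ j₀ → μ t = a ∨ μ t = 0) :
    ∑ t, F (μ t) = ((univ.filter (fun t => μ t = a)).card : ℝ) * F a + F b := by
  have hsplit := Finset.add_sum_erase (univ : Finset ι) (fun t => F (μ t)) (mem_univ j₀)
  rw [← hsplit, hj]
  have hrest : ∑ t ∈ univ.erase j₀, F (μ t) = ∑ t ∈ univ.erase j₀, (if μ t = a then F a else 0) := by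
    apply Finset.sum_congr rfl
    intro t ht
    rcases hother t (Finset.ne_of_mem_erase ht) with h | h
    · rw [h, if_pos rfl]
    · rw [h, if_neg (fun hh => ha0 hh.symm), hF0]
  have hcards : (univ.erase j₀).filter (fun t => μ t = a) = univ.filter (fun t => μ t = a) := by
    ext x
    simp only [Finset.mem_filter, Finset.mem_erase, Finset.mem_univ, true_and, and_true]
    constructor
    · tauto
    · intro hx
      refine ⟨fun hxx => ?_, hx⟩
      rw [hxx, hj] at hx
      exact hba hx
  rw [hrest, ← Finset.sum_filter, hcards, Finset.sum_const, nsmul_eq_mul]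
  ring

lemma E4_val (mm : ℕ) (hm : 1 ≤ mm) (a b : ℝ) (ha : 0 < a) (hb : 0 ≤ b) (hba : b < a)
    (M₂ M₄ : ℝ) (h2 : M₂ = mm*a + b) (h4 : M₄ = mm*a^2+b^2)
    (k : ℕ) (hk : k = ⌊M₂^2/M₄⌋₊)
    (U : ℝ) (hU : U = Real.sqrt ((k:ℝ)*((k:ℝ)+1)*M₄ - (k:ℝ)*M₂^2)) :
    Real.sqrt ((k:ℝ)*((k:ℝ)*M₂+U)/((k:ℝ)+1)) + Real.sqrt ((M₂-U)/((k:ℝ)+1))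
      = mm*Real.sqrt a + Real.sqrt b := by
  have hm1 : (1:ℝ) ≤ (mm:ℝ) := by exact_mod_cast hm
  have hM4pos : 0 < M₄ := by rw [h4]; nlinarith
  rcases hb.eq_or_lt with hb0 | hbpos
  · -- b = 0
    rw [← hb0] at h2 h4 ⊢
    rw [add_zero] at h2
    have hr : M₂^2/M₄ = ((mm:ℕ):ℝ) := by
      rw [h2, h4]
      field_simp
      ring
    have hkm : k = mm := by rw [hk, hr, Nat.floor_natCast]
    have hUval : U = (mm:ℝ)*a := by
      rw [hU, hkm]
      have harg : (mm:ℝ)*((mm:ℝ)+1)*M₄ - (mm:ℝ)*M₂^2 = ((mm:ℝ)*a)^2 := by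
        rw [h2, h4]; ring
      rw [harg, Real.sqrt_sq (by positivity)]
    have e1 : (mm:ℝ)*((mm:ℝ)*M₂+U)/((mm:ℝ)+1) = ((mm:ℝ))^2*a := by
      rw [hUval, h2]
      field_simp
    have e2 : (M₂-U)/((mm:ℝ)+1) = 0 := by
      rw [hUval, h2]; field_simp; ring
    rw [hkm, e1, e2]
    simp [Real.sqrt_mul (show (0:ℝ) ≤ (mm:ℝ)^2 by positivity), Real.sqrt_sq (show (0:ℝ) ≤ (mm:ℝ) by positivity)]
  · -- 0 < b
    have hlow : (mm:ℝ)*M₄ < M₂^2 := by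
      have hid : M₂^2 - (mm:ℝ)*M₄ = b*((mm:ℝ)*(2*a-b)+b) := by rw [h2, h4]; ring
      nlinarith [mul_pos hbpos (show (0:ℝ) < (mm:ℝ)*(2*a-b)+b by nlinarith)]
    have hhigh : M₂^2 < ((mm:ℝ)+1)*M₄ := by
      have hid : ((mm:ℝ)+1)*M₄ - M₂^2 = (mm:ℝ)*(a-b)^2 := by rw [h2, h4]; ring
      nlinarith [mul_pos (show (0:ℝ) < (mm:ℝ) by linarith) (pow_pos (sub_pos.2 hba) 2)]
    have hkm : k = mm := by
      rw [hk, Nat.floor_eq_iff (by positivity)]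
      constructor
      · rw [le_div_iff₀ hM4pos]; nlinarith
      · rw [div_lt_iff₀ hM4pos]; nlinarith
    have hkmr : (k:ℝ) = (mm:ℝ) := by rw [hkm]
    have hUval : U = (mm:ℝ)*(a-b) := by
      rw [hU, hkmr]
      have harg : (mm:ℝ)*((mm:ℝ)+1)*M₄ - (mm:ℝ)*M₂^2 = ((mm:ℝ)*(a-b))^2 := by
        rw [h2, h4]; ring
      rw [harg, Real.sqrt_sq (by nlinarith)]
    have e1 : (k:ℝ)*((k:ℝ)*M₂+U)/((k:ℝ)+1) = ((mm:ℝ))^2*a := by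
      rw [hkmr, hUval, h2]
      field_simp
      ring
    have e2 : (M₂-U)/((k:ℝ)+1) = b := by
      rw [hkmr, hUval, h2]
      field_simp
      ring
    rw [e1, e2, Real.sqrt_mul (by positivity), Real.sqrt_sq (by positivity)]

lemma E4_le_sum (lam : ι → ℝ) (hnn : ∀ i, 0 ≤ lam i)
    (M₂ M₄ : ℝ) (h2 : ∑ i, lam i = M₂) (h4 : ∑ i, (lam i)^2 = M₄)
    (k : ℕ) (hk : k = ⌊M₂^2/M₄⌋₊)
    (U : ℝ) (hU : U = Real.sqrt ((k:ℝ)*((k:ℝ)+1)*M₄ - (k:ℝ)*M₂^2)) :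
    Real.sqrt ((k:ℝ)*((k:ℝ)*M₂+U)/((k:ℝ)+1)) + Real.sqrt ((M₂-U)/((k:ℝ)+1))
      ≤ ∑ i, Real.sqrt (lam i) := by
  have hRHS : 0 ≤ ∑ i, Real.sqrt (lam i) := Finset.sum_nonneg fun i _ => Real.sqrt_nonneg _
  by_cases hM2 : M₂ = 0
  · have hz : ∀ i, lam i = 0 := by
      have := (Finset.sum_eq_zero_iff_of_nonneg (fun i _ => hnn i)).1 (by rw [h2, hM2])
      intro i; exact this i (mem_univ i)
    have hM4 : M₄ = 0 := by rw [← h4]; apply Finset.sum_eq_zero; intro i _; rw [hz i]; ring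
    have hk0 : k = 0 := by rw [hk, hM2, hM4]; norm_num
    have hU0 : U = 0 := by rw [hU, hk0, hM2, hM4]; norm_num
    rw [hk0, hU0, hM2]
    norm_num
    exact hRHS
  · have hM2pos : 0 < M₂ := lt_of_le_of_ne (h2 ▸ Finset.sum_nonneg fun i _ => hnn i) (Ne.symm hM2)
    have hM4pos : 0 < M₄ := by
      rcases (Finset.sum_nonneg (fun i _ => sq_nonneg (lam i))).eq_or_lt with h | h
      · exfalso
        apply hM2
        rw [← h2]
        apply Finset.sum_eq_zero
        intro i _
        have := (Finset.sum_eq_zero_iff_of_nonneg (fun i _ => sq_nonneg (lam i))).1 h.symm i (mem_univ i)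
        exact (pow_eq_zero_iff two_ne_zero).mp this
      · rw [← h4]; exact h
    -- minimizer
    have hlamK : lam ∈ Kset (ι := ι) M₂ M₄ := ⟨hnn, h2, h4⟩
    obtain ⟨μ, hμK, hmin⟩ := exists_minimizer ⟨lam, hlamK⟩
    have hμlam : sqrtSum μ ≤ ∑ i, Real.sqrt (lam i) := hmin hlamK
    have h0 : ∀ t, 0 ≤ μ t := hμK.1
    have hs2 : ∑ t, μ t = M₂ := hμK.2.1
    have hs4 : ∑ t, (μ t)^2 = M₄ := hμK.2.2
    -- a positive coordinate exists
    have hexpos : ∃ t, 0 < μ t := by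
      by_contra hcon
      push_neg at hcon
      apply hM2
      rw [← hs2]
      apply Finset.sum_eq_zero
      intro t _
      exact le_antisymm (hcon t) (h0 t)
    -- max positive coordinate
    obtain ⟨t₁, ht₁⟩ := hexpos
    obtain ⟨i₀, -, hi₀max⟩ := Finset.exists_max_image (univ : Finset ι) μ ⟨t₁, mem_univ t₁⟩
    have hi₀max' : ∀ t, μ t ≤ μ i₀ := fun t => hi₀max t (mem_univ t)
    have hi₀pos : 0 < μ i₀ := lt_of_lt_of_le ht₁ (hi₀max' t₁)
    set a := μ i₀ with hadef
    have hsqrtSum : sqrtSum μ = ∑ t, Real.sqrt (μ t) := rfl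
    by_cases hallA : ∀ t, 0 < μ t → μ t = a
    · -- single positive value
      have hall : ∀ t, μ t = a ∨ μ t = 0 := by
        intro t
        rcases (h0 t).eq_or_lt with h | h
        · exact Or.inr h.symm
        · exact Or.inl (hallA t h)
      set mm := (univ.filter (fun t => μ t = a)).card with hmm
      have hm1 : 1 ≤ mm := by
        rw [hmm]
        refine Finset.card_pos.2 ⟨i₀, ?_⟩
        simp [Finset.mem_filter, hadef]
      have e2 : M₂ = mm*a + 0 := by
        rw [← hs2, sum_of_one_val (fun x => x) rfl μ a (ne_of_gt hi₀pos) hall]; ring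
      have e4 : M₄ = mm*a^2 + 0^2 := by
        rw [← hs4, sum_of_one_val (fun x => x^2) (by norm_num) μ a (ne_of_gt hi₀pos) hall]; ring
      have ef : sqrtSum μ = mm*Real.sqrt a + Real.sqrt 0 := by
        rw [hsqrtSum, sum_of_one_val Real.sqrt Real.sqrt_zero μ a (ne_of_gt hi₀pos) hall,
          Real.sqrt_zero]
        ring
      have := E4_val mm hm1 a 0 hi₀pos le_rfl hi₀pos M₂ M₄ e2 e4 k hk U hU
      rw [this, ← ef]
      exact hμlam
    · push_neg at hallA
      obtain ⟨j₀, hj₀pos, hj₀ne⟩ := hallA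
      set b := μ j₀ with hbdef
      have hba : b < a := lt_of_le_of_ne (hi₀max' j₀) hj₀ne
      have hi₀j₀ : μ i₀ ≠ μ j₀ := fun h => hj₀ne h.symm
      have hvals : ∀ t, μ t = a ∨ μ t = b ∨ μ t = 0 := by
        intro t
        rcases (h0 t).eq_or_lt with h | hpos
        · exact Or.inr (Or.inr h.symm)
        · by_contra hcon
          push_neg at hcon
          obtain ⟨hna, hnb, -⟩ := hcon
          exact no_three_distinct hμK hmin hi₀pos hpos hj₀pos
            (fun h => hna h.symm) hi₀j₀ hnb
      have hbuniq : ∀ t, t ≠ j₀ → μ t ≠ b := by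
        intro t htne hcon
        refine no_smallpair hμK hmin (i := i₀) (j := t) (l := j₀) ?_ ?_ htne ?_ ?_ ?_
        · intro h; rw [← h] at hcon; exact hj₀ne (hcon.symm ▸ rfl)
        · intro h; exact hi₀j₀ (by rw [h])
        · rw [hcon]; exact lt_of_lt_of_le hj₀pos (le_of_eq rfl)
        · rw [hcon]
        · rw [hcon]; exact hba
      have hother : ∀ t, t ≠ j₀ → μ t = a ∨ μ t = 0 := by
        intro t ht
        rcases hvals t with h | h | h
        · exact Or.inl h
        · exact absurd h (hbuniq t ht)
        · exact Or.inr h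
      set mm := (univ.filter (fun t => μ t = a)).card with hmm
      have hm1 : 1 ≤ mm := by
        rw [hmm]
        refine Finset.card_pos.2 ⟨i₀, ?_⟩
        simp [Finset.mem_filter, hadef]
      have e2 : M₂ = mm*a + b := by
        rw [← hs2, sum_of_two_vals (fun x => x) rfl μ a b (ne_of_gt hi₀pos) (ne_of_lt hba) j₀ rfl hother]
      have e4 : M₄ = mm*a^2 + b^2 := by
        rw [← hs4, sum_of_two_vals (fun x => x^2) (by norm_num) μ a b (ne_of_gt hi₀pos) (ne_of_lt hba) j₀ rfl hother]
      have ef : sqrtSum μ = mm*Real.sqrt a + Real.sqrt b := by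
        rw [hsqrtSum, sum_of_two_vals Real.sqrt Real.sqrt_zero μ a b (ne_of_gt hi₀pos) (ne_of_lt hba) j₀ rfl hother]
      have := E4_val mm hm1 a b hi₀pos (h0 j₀) hba M₂ M₄ e2 e4 k hk U hU
      rw [this, ← ef]
      exact hμlam

end AuxE4

section AuxMatrix
open Finset


lemma trace_eq_sum_eigen {n : Type*} [Fintype n] [DecidableEq n] {G : Matrix n n ℂ}
    (hH : G.IsHermitian) : G.trace = ∑ i, (hH.eigenvalues i : ℂ) := by
  conv_lhs => rw [hH.spectral_theorem, Unitary.conjStarAlgAut_apply]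
  rw [Matrix.trace_mul_cycle]
  have h1 : (star (hH.eigenvectorUnitary : Matrix n n ℂ)) * (hH.eigenvectorUnitary : Matrix n n ℂ) = 1 :=
    Matrix.mem_unitaryGroup_iff'.mp hH.eigenvectorUnitary.2
  rw [h1, Matrix.one_mul, Matrix.trace_diagonal]
  rfl

lemma trace_sq_eq_sum_eigen {n : Type*} [Fintype n] [DecidableEq n] {G : Matrix n n ℂ}
    (hH : G.IsHermitian) : (G*G).trace = ∑ i, ((hH.eigenvalues i : ℂ))^2 := by
  set Uc : Matrix n n ℂ := (hH.eigenvectorUnitary : Matrix n n ℂ) with hUc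
  set D : Matrix n n ℂ := Matrix.diagonal (RCLike.ofReal ∘ hH.eigenvalues) with hD
  have hsd : star Uc * G * Uc = D := by
    have h := hH.conjStarAlgAut_star_eigenvectorUnitary
    rw [Unitary.conjStarAlgAut_apply, Unitary.coe_star, star_star] at h
    exact h
  have h2 : Uc * star Uc = 1 := Matrix.mem_unitaryGroup_iff.mp hH.eigenvectorUnitary.2
  have hGG : star Uc * (G * G) * Uc = D * D := by
    rw [← hsd]
    have e : (star Uc * G * Uc) * (star Uc * G * Uc) = star Uc * G * (Uc * star Uc) * (G * Uc) := by
      noncomm_ring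
    rw [e, h2, Matrix.mul_one]
    noncomm_ring
  have htr : (G*G).trace = (D*D).trace := by
    calc (G*G).trace = (Uc * star Uc * (G*G)).trace := by rw [h2, Matrix.one_mul]
    _ = (star Uc * (G*G) * Uc).trace := (Matrix.trace_mul_cycle (star Uc) (G*G) Uc).symm
    _ = (D*D).trace := by rw [hGG]
  rw [htr, hD, Matrix.diagonal_mul_diagonal, Matrix.trace_diagonal]
  apply Finset.sum_congr rfl
  intro i _
  simp [pow_two]

lemma frob_le_one {d : ℕ} {M : Matrix (Fin d) (Fin d) ℂ} (hM : M.PosSemidef) (htr : M.trace = 1) :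
    ∑ pr : Fin d × Fin d, Complex.normSq (M pr.1 pr.2) ≤ 1 := by
  have hH := hM.1
  have h1 : ∑ i, hH.eigenvalues i = 1 := by
    have h := trace_eq_sum_eigen hH
    rw [htr] at h
    exact_mod_cast h.symm
  have hconj : ∀ i j, M j i = (starRingEnd ℂ) (M i j) := by
    intro i j
    have := congrFun (congrFun hH j) i
    rw [Matrix.conjTranspose_apply] at this
    rw [← this]
    simp
  have h2 : (M*M).trace = ((∑ pr : Fin d × Fin d, Complex.normSq (M pr.1 pr.2) : ℝ) : ℂ) := by
    rw [Matrix.trace]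
    push_cast
    rw [Fintype.sum_prod_type]
    apply Finset.sum_congr rfl
    intro i _
    rw [Matrix.diag_apply, Matrix.mul_apply]
    apply Finset.sum_congr rfl
    intro j _
    rw [hconj j i, mul_comm, Complex.mul_conj, Complex.normSq_conj]
  have h3 : (M*M).trace = ((∑ i, (hH.eigenvalues i)^2 : ℝ) : ℂ) := by
    rw [trace_sq_eq_sum_eigen hH]
    push_cast
    rfl
  have h4 : ∑ pr : Fin d × Fin d, Complex.normSq (M pr.1 pr.2) = ∑ i, (hH.eigenvalues i)^2 := by
    have := h2.symm.trans h3
    exact_mod_cast this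
  rw [h4]
  calc ∑ i, (hH.eigenvalues i)^2 ≤ (∑ i, hH.eigenvalues i)^2 :=
        Finset.sum_sq_le_sq_sum_of_nonneg (fun i _ => hM.eigenvalues_nonneg i)
  _ = 1 := by rw [h1]; norm_num

lemma sqrt_inv_mul_self {x : ℝ} (hx : 0 ≤ x) : (Real.sqrt x)⁻¹ * x = Real.sqrt x := by
  rcases hx.eq_or_lt with h | h
  · rw [← h]; simp
  · rw [inv_mul_eq_div, div_eq_iff (by positivity : Real.sqrt x ≠ 0)]
    exact (Real.mul_self_sqrt hx).symm

lemma cs_abs {n : Type*} [Fintype n] (z t : n → ℂ) :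
    ‖∑ i, z i * t i‖
      ≤ Real.sqrt (∑ i, Complex.normSq (z i)) * Real.sqrt (∑ i, Complex.normSq (t i)) := by
  have h1 : ‖∑ i, z i * t i‖ ≤ ∑ i, ‖z i‖ * ‖t i‖ := by
    refine le_trans (norm_sum_le univ (fun i => z i * t i)) ?_
    apply le_of_eq
    apply Finset.sum_congr rfl
    intro i _
    exact norm_mul (z i) (t i)
  have h2 : (∑ i, ‖z i‖ * ‖t i‖)^2
      ≤ (∑ i, Complex.normSq (z i)) * (∑ i, Complex.normSq (t i)) := by
    have := Finset.sum_mul_sq_le_sq_mul_sq univ (fun i => ‖z i‖) (fun i => ‖t i‖)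
    calc (∑ i, ‖z i‖ * ‖t i‖)^2
        ≤ (∑ i, ‖z i‖^2) * (∑ i, ‖t i‖^2) := this
    _ = (∑ i, Complex.normSq (z i)) * (∑ i, Complex.normSq (t i)) := by
        simp [Complex.sq_norm]
  have h3 : (0:ℝ) ≤ ∑ i, ‖z i‖ * ‖t i‖ :=
    Finset.sum_nonneg fun i _ => mul_nonneg (norm_nonneg _) (norm_nonneg _)
  have h4 : ∑ i, ‖z i‖ * ‖t i‖
      ≤ Real.sqrt (∑ i, Complex.normSq (z i)) * Real.sqrt (∑ i, Complex.normSq (t i)) := by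
    rw [← Real.sqrt_mul (Finset.sum_nonneg fun i _ => Complex.normSq_nonneg _)]
    rw [show (∑ i, ‖z i‖ * ‖t i‖)
      = Real.sqrt ((∑ i, ‖z i‖ * ‖t i‖)^2) from (Real.sqrt_sq h3).symm]
    exact Real.sqrt_le_sqrt h2
  linarith

lemma nuclear_bound {n c : Type*} [Fintype n] [DecidableEq n] [Fintype c] [DecidableEq c]
    {ι : Type*} (s : Finset ι) (p : ι → ℝ) (hp : ∀ j ∈ s, 0 ≤ p j) (hp1 : ∑ j ∈ s, p j = 1)
    (a : ι → n → ℂ) (b : ι → c → ℂ)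
    (ha : ∀ j ∈ s, ∑ i, Complex.normSq (a j i) ≤ 1)
    (hb : ∀ j ∈ s, ∑ q, Complex.normSq (b j q) ≤ 1)
    (R : Matrix n c ℂ) (hR : ∀ i q, R i q = ∑ j ∈ s, (p j : ℂ) * a j i * b j q)
    (hH : (R * Rᴴ).IsHermitian) (hnn : ∀ i, 0 ≤ hH.eigenvalues i) :
    ∑ i, Real.sqrt (hH.eigenvalues i) ≤ 1 := by
  classical
  set lam := hH.eigenvalues with hlam
  set Uc : Matrix n n ℂ := (hH.eigenvectorUnitary : Matrix n n ℂ) with hUc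
  have hULR : star Uc * (R*Rᴴ) * Uc = Matrix.diagonal (RCLike.ofReal ∘ lam) :=
    by
      have h := hH.conjStarAlgAut_star_eigenvectorUnitary
      rw [Unitary.conjStarAlgAut_apply, Unitary.coe_star, star_star] at h
      exact h
  have h2 : Uc * star Uc = 1 := Matrix.mem_unitaryGroup_iff.mp hH.eigenvectorUnitary.2
  set C : Matrix n c ℂ := star Uc * R with hC
  have hCC : C * Cᴴ = Matrix.diagonal (RCLike.ofReal ∘ lam) := by
    rw [hC, Matrix.conjTranspose_mul, Matrix.star_eq_conjTranspose,
      Matrix.conjTranspose_conjTranspose]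
    rw [← hULR, Matrix.star_eq_conjTranspose]
    simp only [Matrix.mul_assoc]
  have hrow : ∀ i i', (∑ q, C i q * star (C i' q)) = if i = i' then ((lam i :ℝ):ℂ) else 0 := by
    intro i i'
    have h := congrFun (congrFun hCC i) i'
    rw [Matrix.mul_apply] at h
    simp only [Matrix.conjTranspose_apply] at h
    rw [Matrix.diagonal_apply] at h
    convert h using 2
    simp
  have hsrow : ∀ i i', (∑ q, (starRingEnd ℂ) (C i q) * C i' q)
      = if i = i' then ((lam i :ℝ):ℂ) else 0 := by
    intro i i'
    have h := congrArg (starRingEnd ℂ) (hrow i i')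
    rw [map_sum] at h
    have e : ∀ q, (starRingEnd ℂ) (C i q * star (C i' q))
        = (starRingEnd ℂ) (C i q) * C i' q := by
      intro q
      rw [_root_.map_mul, RCLike.star_def, Complex.conj_conj]
    rw [Finset.sum_congr rfl (fun q _ => e q)] at h
    rw [h]
    split_ifs
    · exact Complex.conj_ofReal _
    · exact map_zero _
  -- vectors w
  set w : n → EuclideanSpace ℂ c :=
    fun i => WithLp.toLp 2 (fun q => (((Real.sqrt (lam i)):ℝ):ℂ)⁻¹ * C i q) with hw
  have hwq : ∀ i q, w i q = (((Real.sqrt (lam i)):ℝ):ℂ)⁻¹ * C i q := fun i q => rfl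
  -- key1
  have key1 : ∀ i, ∑ q, (starRingEnd ℂ) (w i q) * C i q = ((Real.sqrt (lam i) : ℝ) : ℂ) := by
    intro i
    have e : ∀ q, (starRingEnd ℂ) (w i q) * C i q
        = (((Real.sqrt (lam i)):ℝ):ℂ)⁻¹ * ((starRingEnd ℂ) (C i q) * C i q) := by
      intro q
      rw [hwq, _root_.map_mul, map_inv₀, Complex.conj_ofReal]
      ring
    rw [Finset.sum_congr rfl (fun q _ => e q), ← Finset.mul_sum, hsrow i i, if_pos rfl]
    rw [← Complex.ofReal_inv, ← Complex.ofReal_mul, sqrt_inv_mul_self (hnn i)]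
  -- orthonormality
  have hinner : ∀ i i', (inner ℂ (w i) (w i') : ℂ)
      = ((((Real.sqrt (lam i)):ℝ):ℂ))⁻¹ * ((((Real.sqrt (lam i')):ℝ):ℂ))⁻¹
        * (if i = i' then ((lam i :ℝ):ℂ) else 0) := by
    intro i i'
    rw [PiLp.inner_apply]
    have e : ∀ q, (inner ℂ (w i q) (w i' q) : ℂ)
        = ((((Real.sqrt (lam i)):ℝ):ℂ))⁻¹ * ((((Real.sqrt (lam i')):ℝ):ℂ))⁻¹
          * ((starRingEnd ℂ) (C i q) * C i' q) := by
      intro q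
      rw [RCLike.inner_apply, hwq, hwq, _root_.map_mul, map_inv₀, Complex.conj_ofReal]
      ring
    rw [Finset.sum_congr rfl (fun q _ => e q), ← Finset.mul_sum, hsrow i i']
  have hON : Orthonormal ℂ (fun i : {i // lam i ≠ 0} => w i.1) := by
    rw [orthonormal_iff_ite]
    intro i j
    rw [hinner i.1 j.1]
    by_cases hij : i = j
    · subst hij
      rw [if_pos rfl, if_pos rfl]
      have hs : Real.sqrt (lam i.1) * Real.sqrt (lam i.1) = lam i.1 := Real.mul_self_sqrt (hnn i.1)
      have hs0 : Real.sqrt (lam i.1) ≠ 0 := by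
        simp only [ne_eq, Real.sqrt_eq_zero (hnn i.1)]
        exact i.2
      have hreal : (Real.sqrt (lam i.1))⁻¹ * (Real.sqrt (lam i.1))⁻¹ * (lam i.1) = 1 := by
        field_simp
        linarith [hs]
      exact_mod_cast hreal
    · have hij' : i.1 ≠ j.1 := fun h => hij (Subtype.ext h)
      rw [if_neg hij', if_neg hij, mul_zero]
  -- Bessel
  have hBess : ∀ j ∈ s, ∑ i, Complex.normSq (∑ q, (starRingEnd ℂ) (w i q) * b j q)
      ≤ 1 := by
    intro j hj
    set bv : EuclideanSpace ℂ c := WithLp.toLp 2 (fun q => b j q) with hbv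
    have h1 : ∀ i, (inner ℂ (w i) bv : ℂ) = ∑ q, (starRingEnd ℂ) (w i q) * b j q := by
      intro i
      rw [PiLp.inner_apply]
      apply Finset.sum_congr rfl
      intro q _
      rw [RCLike.inner_apply']
    have h2 : ∑ i, Complex.normSq (∑ q, (starRingEnd ℂ) (w i q) * b j q)
        = ∑ i ∈ univ.filter (fun i => lam i ≠ 0),
            Complex.normSq (∑ q, (starRingEnd ℂ) (w i q) * b j q) := by
      symm
      apply Finset.sum_filter_of_ne
      intro i _ hne
      by_contra hlam0
      apply hne
      have hwzero : ∀ q, w i q = 0 := by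
        intro q
        rw [hwq, hlam0, Real.sqrt_zero]
        simp
      rw [Finset.sum_congr rfl (fun q (_ : q ∈ univ) => by rw [hwzero q, map_zero, zero_mul])]
      simp
    have h3 := Orthonormal.sum_inner_products_le (𝕜 := ℂ) (s := (univ : Finset {i // lam i ≠ 0})) bv hON
    have h4 : ∑ i ∈ univ.filter (fun i => lam i ≠ 0),
        Complex.normSq (∑ q, (starRingEnd ℂ) (w i q) * b j q)
        = ∑ i : {i // lam i ≠ 0}, ‖(inner ℂ (w i.1) bv : ℂ)‖^2 := by
      rw [Finset.sum_subtype (p := fun i => lam i ≠ 0) (univ.filter (fun i => lam i ≠ 0))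
        (fun x => by simp) (fun i => Complex.normSq (∑ q, (starRingEnd ℂ) (w i q) * b j q))]
      apply Finset.sum_congr rfl
      intro i _
      rw [h1 i.1, ← Complex.sq_norm]
    have h5 : ‖bv‖^2 ≤ 1 := by
      rw [EuclideanSpace.norm_eq, Real.sq_sqrt (Finset.sum_nonneg fun q _ => sq_nonneg _)]
      calc ∑ q, ‖bv q‖^2 = ∑ q, Complex.normSq (b j q) := by
            apply Finset.sum_congr rfl
            intro q _
            rw [← Complex.sq_norm]
      _ ≤ 1 := hb j hj
    rw [h2, h4]
    exact le_trans h3 h5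
  -- entry decomposition of C
  set g : ι → n → ℂ := fun j i => ∑ i', star (Uc i' i) * a j i' with hg
  have hCentry : ∀ i q, C i q = ∑ j ∈ s, (p j : ℂ) * g j i * b j q := by
    intro i q
    rw [hC, Matrix.mul_apply]
    have e : ∀ i', (star Uc) i i' * R i' q = ∑ j ∈ s, (p j : ℂ) * (star (Uc i' i) * a j i') * b j q := by
      intro i'
      rw [hR, Finset.mul_sum]
      apply Finset.sum_congr rfl
      intro j _
      have : (star Uc) i i' = star (Uc i' i) := by
        rw [Matrix.star_apply]
      rw [this]
      ring
    rw [Finset.sum_congr rfl (fun i' _ => e i')]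
    rw [Finset.sum_comm]
    apply Finset.sum_congr rfl
    intro j _
    show ∑ i', (p j:ℂ) * (star (Uc i' i) * a j i') * b j q
        = (p j:ℂ) * (∑ i', star (Uc i' i) * a j i') * b j q
    rw [Finset.mul_sum, Finset.sum_mul]
  -- g preserves norm
  have hgnorm : ∀ j ∈ s, ∑ i, Complex.normSq (g j i) ≤ 1 := by
    intro j hj
    have hgv : g j = (star Uc) *ᵥ (a j) := by
      funext i
      rw [hg, Matrix.mulVec]
      simp only
      rw [dotProduct]
      apply Finset.sum_congr rfl
      intro i' _
      rw [Matrix.star_apply]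
    have hdot : ∀ (v : n → ℂ), star v ⬝ᵥ v = ((∑ i, Complex.normSq (v i) : ℝ) : ℂ) := by
      intro v
      rw [dotProduct]
      push_cast
      apply Finset.sum_congr rfl
      intro i _
      rw [Pi.star_apply, mul_comm, RCLike.star_def, Complex.mul_conj]
    have h2' : Uc * Ucᴴ = 1 := by rw [← Matrix.star_eq_conjTranspose]; exact h2
    have hpres : star (g j) ⬝ᵥ (g j) = star (a j) ⬝ᵥ (a j) := by
      rw [hgv, Matrix.star_mulVec, Matrix.star_eq_conjTranspose, Matrix.conjTranspose_conjTranspose]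
      rw [← Matrix.dotProduct_mulVec, Matrix.mulVec_mulVec, h2', Matrix.one_mulVec]
    have := (hdot (g j)).symm.trans (hpres.trans (hdot (a j)))
    have hre : ∑ i, Complex.normSq (g j i) = ∑ i, Complex.normSq (a j i) := by exact_mod_cast this
    rw [hre]
    exact ha j hj
  -- main chain
  set τ : ι → n → ℂ := fun j i => ∑ q, (starRingEnd ℂ) (w i q) * b j q with hτ
  have eJ : ∀ j, ∀ i, (∑ q, (starRingEnd ℂ) (w i q) * ((p j:ℂ) * g j i * b j q))
      = (p j:ℂ) * (g j i * τ j i) := by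
    intro j i
    calc ∑ q, (starRingEnd ℂ) (w i q) * ((p j:ℂ) * g j i * b j q)
        = ∑ q, (p j:ℂ) * (g j i * ((starRingEnd ℂ) (w i q) * b j q)) := by
          apply Finset.sum_congr rfl
          intro q _
          ring
    _ = (p j:ℂ) * ∑ q, g j i * ((starRingEnd ℂ) (w i q) * b j q) := (Finset.mul_sum _ _ _).symm
    _ = (p j:ℂ) * (g j i * ∑ q, (starRingEnd ℂ) (w i q) * b j q) := by rw [← Finset.mul_sum]
    _ = (p j:ℂ) * (g j i * τ j i) := rfl
  have eL : ∀ i, (∑ q, (starRingEnd ℂ) (w i q) * C i q)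
      = ∑ j ∈ s, (p j:ℂ) * (g j i * τ j i) := by
    intro i
    rw [Finset.sum_congr rfl (fun q (_ : q ∈ univ) => by rw [hCentry i q, Finset.mul_sum])]
    rw [Finset.sum_comm]
    exact Finset.sum_congr rfl (fun j _ => eJ j i)
  have hsum : ((∑ i, Real.sqrt (lam i) : ℝ) : ℂ) = ∑ j ∈ s, (p j : ℂ) * (∑ i, g j i * τ j i) := by
    push_cast
    calc ∑ i, ((Real.sqrt (lam i) : ℝ) : ℂ)
        = ∑ i, ∑ j ∈ s, (p j:ℂ) * (g j i * τ j i) := by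
          apply Finset.sum_congr rfl
          intro i _
          rw [← eL i, key1 i]
    _ = ∑ j ∈ s, ∑ i, (p j:ℂ) * (g j i * τ j i) := Finset.sum_comm
    _ = ∑ j ∈ s, (p j : ℂ) * (∑ i, g j i * τ j i) := by
          apply Finset.sum_congr rfl
          intro j _
          rw [Finset.mul_sum]
  have hfinal : ∑ i, Real.sqrt (lam i) ≤ ∑ j ∈ s, p j := by
    have h0 : ∑ i, Real.sqrt (lam i) = (((∑ i, Real.sqrt (lam i) : ℝ)):ℂ).re := by
      rw [Complex.ofReal_re]
    rw [h0, hsum, Complex.re_sum]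
    apply Finset.sum_le_sum
    intro j hj
    rw [Complex.re_ofReal_mul]
    have hz : ((∑ i, g j i * τ j i).re) ≤ ‖∑ i, g j i * τ j i‖ :=
      Complex.re_le_norm _
    have hcs := cs_abs (g j) (τ j)
    have hb1 : Real.sqrt (∑ i, Complex.normSq (g j i)) ≤ 1 :=
      Real.sqrt_le_one.2 (hgnorm j hj)
    have hb2 : Real.sqrt (∑ i, Complex.normSq (τ j i)) ≤ 1 :=
      Real.sqrt_le_one.2 (hBess j hj)
    have habs : ‖∑ i, g j i * τ j i‖ ≤ 1 := by
      calc ‖∑ i, g j i * τ j i‖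
          ≤ Real.sqrt (∑ i, Complex.normSq (g j i)) * Real.sqrt (∑ i, Complex.normSq (τ j i)) := hcs
      _ ≤ 1 * 1 := by
          apply mul_le_mul hb1 hb2 (Real.sqrt_nonneg _) (by norm_num)
      _ = 1 := by norm_num
    calc p j * (∑ i, g j i * τ j i).re ≤ p j * 1 := by
          apply mul_le_mul_of_nonneg_left (le_trans hz habs) (hp j hj)
    _ = p j := by ring
  rw [← hp1]
  exact hfinal

end AuxMatrix

open Finset in
/-- For a separable bipartite density matrix `ρ = ∑ᵢ pᵢ Aᵢ ⊗ Bᵢ`, the moment-based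
realignment (CCNR) indicator built from the second moment `M₂ = trace(R Rᴴ)` and the
fourth moment `M₄ = trace((R Rᴴ)²)` of the realignment `R` of `ρ`, namely
`E₄ = √(k(kM₂+U)/(k+1)) + √((M₂−U)/(k+1))` with `k = ⌊M₂²/M₄⌋` and
`U = √(k(k+1)M₄ − kM₂²)`, does not exceed 1. -/
theorem separable_E4_realign_le_one {dA dB : ℕ} {ι : Type*} (s : Finset ι)
    (p : ι → ℝ) (A : ι → Matrix (Fin dA) (Fin dA) ℂ) (B : ι → Matrix (Fin dB) (Fin dB) ℂ)
    (hp : ∀ i ∈ s, 0 ≤ p i) (hpsum : ∑ i ∈ s, p i = 1)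
    (hA : ∀ i ∈ s, (A i).PosSemidef ∧ (A i).trace = 1)
    (hB : ∀ i ∈ s, (B i).PosSemidef ∧ (B i).trace = 1)
    (ρ : Matrix (Fin dA × Fin dB) (Fin dA × Fin dB) ℂ)
    (hρ : ρ = ∑ i ∈ s, (p i : ℂ) • (A i ⊗ₖ B i))
    (M₂ M₄ : ℝ)
    (hM2 : Matrix.trace (realign ρ * (realign ρ)ᴴ) = (M₂ : ℂ))
    (hM4 : Matrix.trace ((realign ρ * (realign ρ)ᴴ) ^ 2) = (M₄ : ℂ))
    (k : ℕ) (hk : k = ⌊M₂ ^ 2 / M₄⌋₊)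
    (U : ℝ) (hU : U = Real.sqrt ((k : ℝ) * ((k : ℝ) + 1) * M₄ - (k : ℝ) * M₂ ^ 2)) :
    Real.sqrt ((k : ℝ) * ((k : ℝ) * M₂ + U) / ((k : ℝ) + 1)) +
        Real.sqrt ((M₂ - U) / ((k : ℝ) + 1)) ≤ 1 := by
  classical
  set R : Matrix (Fin dA × Fin dA) (Fin dB × Fin dB) ℂ := realign ρ with hRdef
  set G := R * Rᴴ with hGdef
  have hG : G.PosSemidef := Matrix.posSemidef_self_mul_conjTranspose R
  have hH : G.IsHermitian := hG.1
  set lam := hH.eigenvalues with hlamdef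
  have hnn : ∀ i, 0 ≤ lam i := fun i => hG.eigenvalues_nonneg i
  have hRentry : ∀ (i : Fin dA × Fin dA) (q : Fin dB × Fin dB),
      R i q = ∑ j ∈ s, ((p j : ℝ) : ℂ) * (fun pr : Fin dA × Fin dA => A j pr.1 pr.2) i
        * (fun pr : Fin dB × Fin dB => B j pr.1 pr.2) q := by
    intro i q
    rw [hRdef]
    show ρ (i.1, q.1) (i.2, q.2) = _
    rw [hρ, Matrix.sum_apply]
    apply Finset.sum_congr rfl
    intro j _
    rw [Matrix.smul_apply, Matrix.kroneckerMap_apply]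
    simp only [smul_eq_mul]
    ring
  have hM2' : M₂ = ∑ i, lam i := by
    have h := trace_eq_sum_eigen hH
    rw [hM2] at h
    exact_mod_cast h
  have hM4' : M₄ = ∑ i, (lam i)^2 := by
    have h := trace_sq_eq_sum_eigen hH
    rw [show G * G = G ^ 2 from (sq G).symm, hM4] at h
    exact_mod_cast h
  have hT : ∑ i, Real.sqrt (lam i) ≤ 1 := by
    refine nuclear_bound s p hp hpsum
      (fun j => fun pr : Fin dA × Fin dA => A j pr.1 pr.2)
      (fun j => fun pr : Fin dB × Fin dB => B j pr.1 pr.2) ?_ ?_ R hRentry hH hnn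
    · intro j hj
      exact frob_le_one (hA j hj).1 (hA j hj).2
    · intro j hj
      exact frob_le_one (hB j hj).1 (hB j hj).2
  have hE4 := E4_le_sum lam hnn M₂ M₄ hM2'.symm hM4'.symm k hk U hU
  exact le_trans hE4 hT
end

section
/- Let (Ω, μ) be a probability space, n ≥ 1, and let X₁, …, X_{2n} : Ω → Matrix p q ℂ be independent, Bochner-integrable matrix-valued random variables each with expectation 𝔼[X_t] = R. Then 𝔼[trace(X₁ X₂ᴴ X₃ X₄ᴴ ⋯ X_{2n−1} X_{2n}ᴴ)] = trace((R Rᴴ)^n). In other words, the product estimator built from 2n independent unbiased snapshots of R is an unbiased estimator of the 2n-th moment M_{2n} = trace((R Rᴴ)^n). -/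
/-!
Write `Zₖ = X_{2k} X_{2k+1}ᴴ`. The two factors of `Zₖ` are independent, so entrywise
`𝔼[Zₖ] = 𝔼[X_{2k}] 𝔼[X_{2k+1}]ᴴ = R Rᴴ`. The prefix product `Z₀ ⋯ Z_{k-1}` is measurable with
respect to the σ-algebra generated by `X₀, …, X_{2k-1}`, hence independent of `Zₖ`; by induction
the expectation of `Z₀ ⋯ Z_{n-1}` is `(R Rᴴ)ⁿ`, and the trace commutes with expectation.
-/

open Matrix MeasureTheory ProbabilityTheory

noncomputable instance matrixMeasurableSpace {p q : Type*} :
    MeasurableSpace (Matrix p q ℂ) :=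
  inferInstanceAs (MeasurableSpace (p → q → ℂ))

section Development

variable {Ω : Type*} [MeasurableSpace Ω] {μ : Measure Ω} {p q r : Type*}

section Measurability

variable {α : Type*} {mα : MeasurableSpace α}

lemma Matrix.measurable_apply (i : p) (j : q) : Measurable fun M : Matrix p q ℂ => M i j :=
  (measurable_pi_apply j).comp (measurable_pi_apply i)

lemma Measurable.matrix_mul [Fintype r] {A : α → Matrix p r ℂ} {B : α → Matrix r q ℂ}
    (hA : Measurable A) (hB : Measurable B) : Measurable fun x => A x * B x :=
  measurable_pi_lambda _ fun i => measurable_pi_lambda _ fun j =>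
    Finset.measurable_sum _ fun k _ =>
      ((Matrix.measurable_apply i k).comp hA).mul ((Matrix.measurable_apply k j).comp hB)

lemma Measurable.matrix_conjTranspose {A : α → Matrix p q ℂ} (hA : Measurable A) :
    Measurable fun x => (A x)ᴴ :=
  measurable_pi_lambda _ fun j => measurable_pi_lambda _ fun i =>
    Complex.continuous_conj.measurable.comp ((Matrix.measurable_apply i j).comp hA)

lemma measurable_iSup_comap {ι β : Type*} [mβ : MeasurableSpace β] {X : ι → α → β} {S : Set ι}
    {i : ι} (hi : i ∈ S) : Measurable[⨆ i ∈ S, mβ.comap (X i)] (X i) :=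
  Measurable.of_comap_le (le_iSup₂ (f := fun i (_ : i ∈ S) => mβ.comap (X i)) i hi)

instance Matrix.measurableMul₂ [Fintype p] : MeasurableMul₂ (Matrix p p ℂ) :=
  ⟨measurable_fst.matrix_mul measurable_snd⟩

end Measurability

def HasMatrixMean (A : Ω → Matrix p q ℂ) (M : Matrix p q ℂ) (μ : Measure Ω) : Prop :=
  ∀ i j, Integrable (fun ω => A ω i j) μ ∧ ∫ ω, A ω i j ∂μ = M i j

namespace HasMatrixMean

lemma const [IsProbabilityMeasure μ] (M : Matrix p q ℂ) : HasMatrixMean (fun _ => M) M μ :=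
  fun i j => ⟨integrable_const _, by simp⟩

lemma conjTranspose {A : Ω → Matrix p q ℂ} {M : Matrix p q ℂ} (hA : HasMatrixMean A M μ) :
    HasMatrixMean (fun ω => (A ω)ᴴ) Mᴴ μ := fun j i =>
  ⟨Complex.conjCLE.toContinuousLinearMap.integrable_comp (hA i j).1, by
    simp only [conjTranspose_apply, RCLike.star_def, integral_conj, (hA i j).2]⟩

lemma integral_trace [Fintype p] {A : Ω → Matrix p p ℂ} {M : Matrix p p ℂ}
    (hA : HasMatrixMean A M μ) : ∫ ω, trace (A ω) ∂μ = trace M := by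
  simp only [trace, diag]
  rw [integral_finsetSum _ fun i _ => (hA i i).1]
  exact Finset.sum_congr rfl fun i _ => (hA i i).2

end HasMatrixMean

lemma ProbabilityTheory.IndepFun.hasMatrixMean_mul [Fintype r] {A : Ω → Matrix p r ℂ}
    {B : Ω → Matrix r q ℂ} {M : Matrix p r ℂ} {N : Matrix r q ℂ} (hAB : IndepFun A B μ)
    (hA : HasMatrixMean A M μ) (hB : HasMatrixMean B N μ) :
    HasMatrixMean (fun ω => A ω * B ω) (M * N) μ := by
  intro i j
  have hindep : ∀ k, IndepFun (fun ω => A ω i k) (fun ω => B ω k j) μ := fun k =>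
    hAB.comp (Matrix.measurable_apply i k) (Matrix.measurable_apply k j)
  have hint : ∀ k, Integrable (fun ω => A ω i k * B ω k j) μ := fun k =>
    (hindep k).integrable_mul (hA i k).1 (hB k j).1
  simp only [mul_apply]
  refine ⟨integrable_finsetSum _ fun k _ => hint k, ?_⟩
  rw [integral_finsetSum _ fun k _ => hint k]
  refine Finset.sum_congr rfl fun k _ => ?_
  rw [(hindep k).integral_fun_mul_eq_mul_integral (hA i k).1.1 (hB k j).1.1, (hA i k).2,
    (hB k j).2]

lemma hasMatrixMean_list_prod_range [IsProbabilityMeasure μ] [Fintype p] [DecidableEq p]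
    {Z : ℕ → Ω → Matrix p p ℂ} {M : Matrix p p ℂ} (n : ℕ)
    (hZ : ∀ k < n, HasMatrixMean (Z k) M μ)
    (hindep : ∀ k < n, IndepFun (fun ω => ((List.range k).map fun j => Z j ω).prod) (Z k) μ) :
    HasMatrixMean (fun ω => ((List.range n).map fun k => Z k ω).prod) (M ^ n) μ := by
  induction n with
  | zero => simpa using HasMatrixMean.const (μ := μ) (1 : Matrix p p ℂ)
  | succ n ih =>
    simp only [List.range_succ, List.map_append, List.prod_append, List.map_singleton,
      List.prod_singleton, pow_succ]
    exact (hindep n n.lt_succ_self).hasMatrixMean_mul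
      (ih (fun k hk => hZ k (by omega)) (fun k hk => hindep k (by omega))) (hZ n n.lt_succ_self)

lemma ProbabilityTheory.iIndepFun.indepFun_of_measurable_iSup {ι β γ δ : Type*}
    [mβ : MeasurableSpace β] [MeasurableSpace γ] [MeasurableSpace δ] {X : ι → Ω → β}
    (hX : iIndepFun X μ) (hmeas : ∀ i, Measurable (X i)) {S T : Set ι} (hST : Disjoint S T)
    {f : Ω → γ} {g : Ω → δ} (hf : Measurable[⨆ i ∈ S, mβ.comap (X i)] f)
    (hg : Measurable[⨆ i ∈ T, mβ.comap (X i)] g) : IndepFun f g μ := by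
  rw [IndepFun_iff_Indep]
  exact indep_of_indep_of_le_right (indep_of_indep_of_le_left
    (indep_iSup_of_disjoint (fun i => (hmeas i).comap_le) hX.iIndep hST) hf.comap_le) hg.comap_le

lemma indepFun_alternatingProd_pair [Fintype p] [Fintype q] [DecidableEq p] (n : ℕ)
    (X : ℕ → Ω → Matrix p q ℂ) (hmeas : ∀ t, Measurable (X t))
    (hindep : iIndepFun (fun t : Fin (2 * n) => X (t : ℕ)) μ) {k : ℕ} (hk : k < n) :
    IndepFun (fun ω => ((List.range k).map fun j => X (2 * j) ω * (X (2 * j + 1) ω)ᴴ).prod)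
      (fun ω => X (2 * k) ω * (X (2 * k + 1) ω)ᴴ) μ := by
  set S : Set (Fin (2 * n)) := {t | (t : ℕ) < 2 * k}
  have hpair : ∀ {U : Set (Fin (2 * n))} {j : ℕ} (h₀ : 2 * j < 2 * n) (h₁ : 2 * j + 1 < 2 * n),
      ⟨2 * j, h₀⟩ ∈ U → ⟨2 * j + 1, h₁⟩ ∈ U →
      Measurable[⨆ t ∈ U, MeasurableSpace.comap (X t) inferInstance]
        fun ω => X (2 * j) ω * (X (2 * j + 1) ω)ᴴ :=
    fun h₀ h₁ hU₀ hU₁ => (measurable_iSup_comap (i := (⟨_, h₀⟩ : Fin (2 * n))) hU₀).matrix_mul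
      (measurable_iSup_comap (i := (⟨_, h₁⟩ : Fin (2 * n))) hU₁).matrix_conjTranspose
  refine hindep.indepFun_of_measurable_iSup (fun t => hmeas t) (disjoint_compl_right (a := S)) ?_
    (hpair (by omega) (by omega) (by simp [S]) (by simp [S]))
  have hprod := List.measurable_prod (m := ⨆ t ∈ S, MeasurableSpace.comap (X t) inferInstance)
    ((List.range k).map fun j ω => X (2 * j) ω * (X (2 * j + 1) ω)ᴴ) <| by
      simp only [List.mem_map, List.mem_range]
      rintro _ ⟨j, hj, rfl⟩
      exact hpair (by omega) (by omega) (by simp [S]; omega) (by simp [S]; omega)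
  convert hprod using 1
  funext ω
  rw [Pi.list_prod_apply, List.map_map]
  rfl

end Development

theorem unbiased_moment_estimator_general {Ω : Type*} [MeasurableSpace Ω]
    (μ : Measure Ω) [IsProbabilityMeasure μ]
    {p q : Type*} [Fintype p] [Fintype q] [DecidableEq p]
    (n : ℕ)
    (X : ℕ → Ω → Matrix p q ℂ) (R : Matrix p q ℂ)
    (hmeas : ∀ t, Measurable (X t))
    (hindep : iIndepFun (m := fun _ : Fin (2 * n) => inferInstance)
      (fun t : Fin (2 * n) => X (t : ℕ)) μ)
    (hint : ∀ t, t < 2 * n → ∀ i j, Integrable (fun ω => X t ω i j) μ)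
    (hexp : ∀ t, t < 2 * n → ∀ i j, ∫ ω, X t ω i j ∂μ = R i j) :
    ∫ ω, Matrix.trace
        (((List.range n).map fun k => X (2 * k) ω * (X (2 * k + 1) ω)ᴴ).prod) ∂μ =
      Matrix.trace ((R * Rᴴ) ^ n) := by
  have hX : ∀ t < 2 * n, HasMatrixMean (X t) R μ := fun t ht i j => ⟨hint t ht i j, hexp t ht i j⟩
  have hpair : ∀ k < n, HasMatrixMean (fun ω => X (2 * k) ω * (X (2 * k + 1) ω)ᴴ) (R * Rᴴ) μ :=
    fun k hk =>
      have hXY := hindep.indepFun (i := (⟨2 * k, by omega⟩ : Fin (2 * n)))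
        (j := ⟨2 * k + 1, by omega⟩) (by simp)
      (hXY.comp measurable_id measurable_id.matrix_conjTranspose).hasMatrixMean_mul
        (hX _ (by omega)) (hX _ (by omega)).conjTranspose
  exact (hasMatrixMean_list_prod_range n hpair
    fun k hk => indepFun_alternatingProd_pair n X hmeas hindep hk).integral_trace

/-- Given `2n` independent, integrable matrix-valued random variables `X₀, …, X_{2n−1}`
each with (entrywise) expectation `R`, the product estimator
`trace(X₀ X₁ᴴ X₂ X₃ᴴ ⋯ X_{2n−2} X_{2n−1}ᴴ)` is an unbiased estimator of the
`2n`-th moment `M_{2n} = trace((R Rᴴ)^n)`. -/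
theorem unbiased_moment_estimator {Ω : Type*} [MeasurableSpace Ω]
    (μ : Measure Ω) [IsProbabilityMeasure μ]
    {p q : Type*} [Fintype p] [Fintype q] [DecidableEq p]
    (n : ℕ) (hn : 1 ≤ n)
    (X : ℕ → Ω → Matrix p q ℂ) (R : Matrix p q ℂ)
    (hmeas : ∀ t, Measurable (X t))
    (hindep : iIndepFun (m := fun _ : Fin (2 * n) => inferInstance)
      (fun t : Fin (2 * n) => X (t : ℕ)) μ)
    (hint : ∀ t, t < 2 * n → ∀ i j, Integrable (fun ω => X t ω i j) μ)
    (hexp : ∀ t, t < 2 * n → ∀ i j, ∫ ω, X t ω i j ∂μ = R i j) :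
    ∫ ω, Matrix.trace
        (((List.range n).map fun k => X (2 * k) ω * (X (2 * k + 1) ω)ᴴ).prod) ∂μ =
      Matrix.trace ((R * Rᴴ) ^ n) :=
  unbiased_moment_estimator_general μ n X R hmeas hindep hint hexp
end

section
/- Let ρ be a Hermitian complex matrix indexed by (Fin dA × Fin dB) × (Fin dA × Fin dB), let m ≥ 1, and let c ∈ Perm (Fin m) be the cyclic shift t ↦ t+1 (mod m). Then trace((W_c^A ⊗ W_{c⁻¹}^B) * ρ^{⊗m}) = trace((W_{c⁻¹}^A ⊗ W_c^B) * ρ^{⊗m}); i.e., in the observable form of the permutation moments the roles of the forward and backward cyclic permutation operators on the two parties may be exchanged. -/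
open Matrix

lemma trace_permOp2_mul {dA dB m : ℕ} (σ τ : Equiv.Perm (Fin m))
    (ρ : Matrix (Fin dA × Fin dB) (Fin dA × Fin dB) ℂ) :
    Matrix.trace (permOp2 σ τ * tensorPow ρ m) =
      ∑ y : Fin m → Fin dA × Fin dB, ∏ t, ρ (y t) ((y (σ t)).1, (y (τ t)).2) := by
  have hcond : ∀ (x y : Fin m → Fin dA × Fin dB),
      (∀ t, (x t).1 = (y (σ t)).1 ∧ (x t).2 = (y (τ t)).2) ↔
        x = fun t => ((y (σ t)).1, (y (τ t)).2) := by
    intro x y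
    constructor
    · intro h; funext t; exact Prod.ext (h t).1 (h t).2
    · intro h t; subst h; exact ⟨rfl, rfl⟩
  simp only [Matrix.trace, Matrix.diag, Matrix.mul_apply, permOp2, tensorPow,
    Matrix.of_apply, hcond, ite_mul, one_mul, zero_mul]
  rw [Finset.sum_comm]
  refine Finset.sum_congr rfl fun y _ => ?_
  rw [Finset.sum_ite_eq' Finset.univ (fun t => ((y (σ t)).1, (y (τ t)).2))
    (fun x => ∏ t, ρ (y t) (x t))]
  simp

/-- In the observable form of the permutation moments, the roles of the forward and
backward cyclic permutation operators on the two parties may be exchanged: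
`trace((W_c^A ⊗ W_{c⁻¹}^B) ρ^{⊗m}) = trace((W_{c⁻¹}^A ⊗ W_c^B) ρ^{⊗m})`. -/
theorem cyclic_permOp_exchange {dA dB m : ℕ} (hm : 1 ≤ m)
    (ρ : Matrix (Fin dA × Fin dB) (Fin dA × Fin dB) ℂ) (hρ : ρ.IsHermitian)
    (c : Equiv.Perm (Fin m))
    (hc : ∀ t : Fin m, ((c t : Fin m) : ℕ) = ((t : ℕ) + 1) % m) :
    Matrix.trace (permOp2 c c⁻¹ * tensorPow ρ m) =
      Matrix.trace (permOp2 c⁻¹ c * tensorPow ρ m) := by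
  haveI : NeZero m := ⟨by omega⟩
  have hc1 : ∀ t : Fin m, c t = t + 1 := by
    intro t
    apply Fin.ext
    rw [hc t]
    simp [Fin.add_def, Fin.val_one', Nat.add_mod_mod]
  have hcinv : ∀ t : Fin m, c⁻¹ t = t - 1 := by
    intro t
    have h := hc1 (t - 1)
    rw [sub_add_cancel] at h
    rw [Equiv.Perm.inv_def, Equiv.symm_apply_eq]
    exact h.symm
  rw [trace_permOp2_mul, trace_permOp2_mul]
  let e : (Fin m → Fin dA × Fin dB) ≃ (Fin m → Fin dA × Fin dB) :=
    { toFun := fun y t => y (-t)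
      invFun := fun y t => y (-t)
      left_inv := fun y => by funext t; simp
      right_inv := fun y => by funext t; simp }
  apply Fintype.sum_equiv e
  intro y
  have h1 : ∀ t : Fin m, (-(-t - 1) : Fin m) = t + 1 := fun t => by abel
  have h2 : ∀ t : Fin m, (-(-t + 1) : Fin m) = t - 1 := fun t => by abel
  refine Fintype.prod_equiv (Equiv.neg (Fin m)) _ _ fun t => ?_
  simp [e, hc1, hcinv, h1, h2]
end

section
/- Let ρ be any complex matrix indexed by (Fin dA × Fin dB) × (Fin dA × Fin dB), let n ≥ 1, let σ ∈ Perm (Fin (2n)) be the product of transpositions (1 2)(3 4)⋯(2n−1 2n) and τ ∈ Perm (Fin (2n)) the product of transpositions (2 3)(4 5)⋯(2n 1). Then trace((W_σ^A ⊗ W_τ^B) * ρ^{⊗2n}) = trace((W_τ^A ⊗ W_σ^B) * ρ^{⊗2n}); i.e., the two pairing patterns of SWAP operators assigned to the two parties may be exchanged without changing the expectation value on 2n identical copies. -/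
/-!
Relabeling the `2n` copies by a permutation `π` fixes `ρ^{⊗2n}` and conjugates
`W_σ^A ⊗ W_τ^B` into `W_{πσπ⁻¹}^A ⊗ W_{πτπ⁻¹}^B`, so by cyclicity of the trace the expectation
value only depends on the pair `(σ, τ)` up to simultaneous conjugation. The cyclic shift
`t ↦ t + 1` conjugates each of the two pairings into the other.
-/

open Matrix

open Equiv

theorem Matrix.trace_submatrix_equiv {ι ι' R : Type*} [Fintype ι] [Fintype ι'] [AddCommMonoid R]
    (M : Matrix ι ι R) (e : ι' ≃ ι) : (M.submatrix e e).trace = M.trace :=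
  e.sum_comp M.diag

section Relabel

variable {m : ℕ} (π : Perm (Fin m))

theorem tensorPow_submatrix_arrowCongr {D : Type*} [Fintype D] (ρ : Matrix D D ℂ) :
    (tensorPow ρ m).submatrix (π.symm.arrowCongr (.refl D)) (π.symm.arrowCongr (.refl D)) =
      tensorPow ρ m := by
  ext x y
  simpa [tensorPow] using Equiv.prod_comp π fun t => ρ (x t) (y t)

theorem permOp2_submatrix_arrowCongr {dA dB : ℕ} (σ τ : Perm (Fin m)) :
    (permOp2 σ τ).submatrix (π.symm.arrowCongr (.refl _)) (π.symm.arrowCongr (.refl _)) =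
      (permOp2 (π * σ * π⁻¹) (π * τ * π⁻¹) : Matrix (Fin m → Fin dA × Fin dB) _ ℂ) := by
  ext x y
  simp only [permOp2, submatrix_apply, of_apply]
  exact if_congr (π.forall_congr_left.trans (by simp)) rfl rfl

theorem trace_permOp2_conj_mul_tensorPow {dA dB : ℕ} (σ τ : Perm (Fin m))
    (ρ : Matrix (Fin dA × Fin dB) (Fin dA × Fin dB) ℂ) :
    trace (permOp2 (π * σ * π⁻¹) (π * τ * π⁻¹) * tensorPow ρ m) =
      trace (permOp2 σ τ * tensorPow ρ m) := by
  rw [← permOp2_submatrix_arrowCongr]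
  nth_rw 1 [← tensorPow_submatrix_arrowCongr π]
  rw [submatrix_mul_equiv, trace_submatrix_equiv]

end Relabel

section Pairings

/-- `(0 1)(2 3)⋯(2n−2 2n−1)`, 0-indexed. -/
def IsAdjacentPairing {n : ℕ} (σ : Perm (Fin (2 * n))) : Prop :=
  ∀ t : Fin (2 * n),
    ((σ t : Fin (2 * n)) : ℕ) = if (t : ℕ) % 2 = 0 then (t : ℕ) + 1 else (t : ℕ) - 1

/-- `(1 2)(3 4)⋯(2n−1 0)`, 0-indexed. -/
def IsShiftedPairing {n : ℕ} (τ : Perm (Fin (2 * n))) : Prop :=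
  ∀ t : Fin (2 * n), ((τ t : Fin (2 * n)) : ℕ) =
    if (t : ℕ) % 2 = 1 then ((t : ℕ) + 1) % (2 * n)
    else ((t : ℕ) + (2 * n - 1)) % (2 * n)

theorem Nat.add_one_mod_eq_ite {a k : ℕ} (h : a < k) :
    (a + 1) % k = if a + 1 = k then 0 else a + 1 := by
  split_ifs with ha
  · rw [ha, Nat.mod_self]
  · exact Nat.mod_eq_of_lt (by omega)

theorem Nat.add_sub_one_mod_eq_ite {a k : ℕ} (h : a < k) :
    (a + (k - 1)) % k = if a = 0 then k - 1 else a - 1 := by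
  split_ifs with ha
  · rw [ha, zero_add, Nat.mod_eq_of_lt (by omega)]
  · rw [show a + (k - 1) = a - 1 + k by omega, Nat.add_mod_right, Nat.mod_eq_of_lt (by omega)]

theorem Fin.val_add_one_eq_ite {k : ℕ} [NeZero k] (t : Fin k) :
    ((t + 1 : Fin k) : ℕ) = if (t : ℕ) + 1 = k then 0 else (t : ℕ) + 1 := by
  rw [Fin.val_add, Fin.val_one', Nat.add_mod_mod, Nat.add_one_mod_eq_ite t.isLt]

variable {n : ℕ} {σ τ : Perm (Fin (2 * n))}

theorem IsShiftedPairing.val_apply (hτ : IsShiftedPairing τ) (t : Fin (2 * n)) :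
    ((τ t : Fin (2 * n)) : ℕ) =
      if (t : ℕ) % 2 = 1 then (if (t : ℕ) + 1 = 2 * n then 0 else (t : ℕ) + 1)
      else (if (t : ℕ) = 0 then 2 * n - 1 else (t : ℕ) - 1) := by
  rw [hτ, Nat.add_one_mod_eq_ite t.isLt, Nat.add_sub_one_mod_eq_ite t.isLt]

theorem IsAdjacentPairing.apply_add_one [NeZero n] (hσ : IsAdjacentPairing σ)
    (hτ : IsShiftedPairing τ) (t : Fin (2 * n)) : σ (t + 1) = τ t + 1 := by
  simp only [Fin.ext_iff, Fin.val_add_one_eq_ite, hσ _, hτ.val_apply]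
  grind

theorem IsShiftedPairing.apply_add_one [NeZero n] (hσ : IsAdjacentPairing σ)
    (hτ : IsShiftedPairing τ) (t : Fin (2 * n)) : τ (t + 1) = σ t + 1 := by
  simp only [Fin.ext_iff, Fin.val_add_one_eq_ite, hσ _, hτ.val_apply]
  grind

end Pairings

/-- The two pairing patterns of SWAP operators — `σ = (1 2)(3 4)⋯(2n−1 2n)` and the
cyclically shifted `τ = (2 3)(4 5)⋯(2n 1)` (written here 0-indexed) — assigned to the two
parties may be exchanged without changing the expectation value on `2n` identical copies:
`trace((W_σ^A ⊗ W_τ^B) ρ^{⊗2n}) = trace((W_τ^A ⊗ W_σ^B) ρ^{⊗2n})`. -/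
theorem swap_pairing_exchange {dA dB n : ℕ} (hn : 1 ≤ n)
    (ρ : Matrix (Fin dA × Fin dB) (Fin dA × Fin dB) ℂ)
    (σ τ : Equiv.Perm (Fin (2 * n)))
    (hσ : ∀ t : Fin (2 * n),
      ((σ t : Fin (2 * n)) : ℕ) = if (t : ℕ) % 2 = 0 then (t : ℕ) + 1 else (t : ℕ) - 1)
    (hτ : ∀ t : Fin (2 * n),
      ((τ t : Fin (2 * n)) : ℕ) =
        if (t : ℕ) % 2 = 1 then ((t : ℕ) + 1) % (2 * n)
        else ((t : ℕ) + (2 * n - 1)) % (2 * n)) :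
    Matrix.trace (permOp2 σ τ * tensorPow ρ (2 * n)) =
      Matrix.trace (permOp2 τ σ * tensorPow ρ (2 * n)) := by
  have : NeZero n := ⟨by omega⟩
  set π := Equiv.addRight (1 : Fin (2 * n))
  have hστ : σ = π * τ * π⁻¹ := eq_mul_inv_of_mul_eq
    (Equiv.ext (IsAdjacentPairing.apply_add_one hσ hτ))
  have hτσ : τ = π * σ * π⁻¹ := eq_mul_inv_of_mul_eq
    (Equiv.ext (IsShiftedPairing.apply_add_one hσ hτ))
  calc trace (permOp2 σ τ * tensorPow ρ (2 * n))
      = trace (permOp2 (π * τ * π⁻¹) (π * σ * π⁻¹) * tensorPow ρ (2 * n)) := by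
        rw [← hστ, ← hτσ]
    _ = trace (permOp2 τ σ * tensorPow ρ (2 * n)) := trace_permOp2_conj_mul_tensorPow π τ σ ρ
end
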